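/- arXiv:0910.3127 — 3 statements merged into one kernel-verified Lean document; each statement's English description precedes it below -/
import Mathlib

section
/- If D is a minimally unsatisfiable 1-DNF set (i.e., a minimally unsatisfiable CNF formula, where a proper subterm of a literal is the empty term and weakening a clause corresponds to removing it) consisting of m clauses, then the number of variables occurring in D is at most m − 1. -/
namespace PaperKDNF

/-- A literal: a propositional variable together with a polarity
(`true` means the variable occurs unnegated). -/
abbrev Lit (V : Type) := V × Bool

/-- A term: a conjunction of literals, represented as a finite set of literals.
The empty term is the constant true. -/
abbrev Trm (V : Type) := Finset (Lit V)

/-- A DNF formula: a disjunction of terms, represented as a finite set of terms. -/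
abbrev DNF (V : Type) := Finset (Trm V)

/-- A DNF set: a finite set of DNF formulas, interpreted as their conjunction. -/
abbrev DNFSet (V : Type) := Finset (DNF V)

/-- Evaluation of a literal under a truth assignment. -/
def litEval {V : Type} (α : V → Bool) (l : Lit V) : Bool :=
  if l.2 then α l.1 else !(α l.1)

/-- A term is satisfied iff all its literals are true. -/
def trmSat {V : Type} (α : V → Bool) (t : Trm V) : Prop :=
  ∀ l ∈ t, litEval α l = true

/-- A DNF formula is satisfied iff some term in it is satisfied. -/
def dnfSat {V : Type} (α : V → Bool) (F : DNF V) : Prop :=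
  ∃ t ∈ F, trmSat α t

/-- A DNF set is satisfied iff every formula in it is satisfied. -/
def setSat {V : Type} (α : V → Bool) (D : DNFSet V) : Prop :=
  ∀ F ∈ D, dnfSat α F

/-- A DNF set is satisfiable iff some truth assignment satisfies it. -/
def Satisfiable {V : Type} (D : DNFSet V) : Prop :=
  ∃ α : V → Bool, setSat α D

/-- A `k`-DNF formula: all terms have at most `k` literals. -/
def IsKDNF {V : Type} (k : ℕ) (F : DNF V) : Prop :=
  ∀ t ∈ F, t.card ≤ k

/-- A `k`-DNF set: a finite set of `k`-DNF formulas. -/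
def IsKDNFSet {V : Type} (k : ℕ) (D : DNFSet V) : Prop :=
  ∀ F ∈ D, IsKDNF k F

/-- The variables occurring in a term. -/
def trmVars {V : Type} [DecidableEq V] (t : Trm V) : Finset V :=
  t.image Prod.fst

/-- The variables occurring in a DNF formula. -/
def dnfVars {V : Type} [DecidableEq V] (F : DNF V) : Finset V :=
  F.biUnion trmVars

/-- The variables occurring in a DNF set. -/
def setVars {V : Type} [DecidableEq V] (D : DNFSet V) : Finset V :=
  D.biUnion dnfVars

/-- The DNF set obtained from `D` by replacing the term `t` of the formula `F ∈ D`
by the term `t'`. -/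
def weaken {V : Type} [DecidableEq V] (D : DNFSet V) (F : DNF V) (t t' : Trm V) :
    DNFSet V :=
  insert (insert t' (F.erase t)) (D.erase F)

/-- A DNF set is minimally unsatisfiable iff it is unsatisfiable and replacing any
single term `t` appearing in a formula `F` of the set by any proper subterm `t'` of
`t` (obtained by deleting at least one literal; the empty term is the constant true)
yields a satisfiable set. -/
def MinUnsat {V : Type} [DecidableEq V] (D : DNFSet V) : Prop :=
  ¬ Satisfiable D ∧
    ∀ F ∈ D, ∀ t ∈ F, ∀ t' ⊂ t, Satisfiable (weaken D F t t')

section Aux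

variable {V : Type} [DecidableEq V]

/-- Clauses of `D` containing a variable from `S`. -/
def NSet (D : DNFSet V) (S : Finset V) : DNFSet V :=
  D.filter (fun F => (dnfVars F ∩ S).Nonempty)

lemma mem_NSet {D : DNFSet V} {F : DNF V} {S : Finset V} :
    F ∈ NSet D S ↔ F ∈ D ∧ ∃ x ∈ S, x ∈ dnfVars F := by
  simp only [NSet, Finset.mem_filter, Finset.Nonempty, Finset.mem_inter]
  tauto

lemma NSet_subset (D : DNFSet V) (S : Finset V) : NSet D S ⊆ D :=
  Finset.filter_subset _ _

lemma NSet_mono (D : DNFSet V) {S T : Finset V} (h : S ⊆ T) :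
    NSet D S ⊆ NSet D T := by
  intro F hF
  rw [mem_NSet] at hF ⊢
  obtain ⟨hFD, x, hxS, hx⟩ := hF
  exact ⟨hFD, x, h hxS, hx⟩

lemma setSat_mono {α : V → Bool} {A B : DNFSet V} (h : A ⊆ B) (hB : setSat α B) :
    setSat α A := fun F hF => hB F (h hF)

lemma sat_of_subset {A B : DNFSet V} (h : A ⊆ B) (hB : Satisfiable B) :
    Satisfiable A := by
  obtain ⟨α, hα⟩ := hB
  exact ⟨α, setSat_mono h hα⟩

lemma nonempty_of_unsat {D : DNFSet V} (h : ¬ Satisfiable D) : D.Nonempty := by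
  rcases Finset.eq_empty_or_nonempty D with rfl | hne
  · exact absurd ⟨fun _ => true, fun F hF => absurd hF (Finset.notMem_empty F)⟩ h
  · exact hne

lemma mem_setVars {D : DNFSet V} {x : V} :
    x ∈ setVars D ↔ ∃ F ∈ D, x ∈ dnfVars F := Finset.mem_biUnion

lemma mem_dnfVars {F : DNF V} {x : V} :
    x ∈ dnfVars F ↔ ∃ t ∈ F, x ∈ trmVars t := Finset.mem_biUnion

lemma mem_trmVars {t : Trm V} {x : V} :
    x ∈ trmVars t ↔ ∃ l ∈ t, l.1 = x := Finset.mem_image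

/-- In a 1-DNF clause, a variable occurs via a singleton term. -/
lemma exists_polarity {D : DNFSet V} (hD : IsKDNFSet 1 D) {F : DNF V} (hF : F ∈ D)
    {x : V} (hx : x ∈ dnfVars F) : ∃ b : Bool, ({(x, b)} : Trm V) ∈ F := by
  obtain ⟨t, ht, hxt⟩ := mem_dnfVars.mp hx
  obtain ⟨l, hl, hlx⟩ := mem_trmVars.mp hxt
  have hcard : t.card ≤ 1 := hD F hF t ht
  have hc1 : t.card = 1 := le_antisymm hcard (Finset.card_pos.mpr ⟨l, hl⟩)
  obtain ⟨l', hl'⟩ := Finset.card_eq_one.mp hc1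
  have : l = l' := by rw [hl'] at hl; exact Finset.mem_singleton.mp hl
  subst this
  refine ⟨l.2, ?_⟩
  have : (x, l.2) = l := by rw [← hlx]
  rw [this, ← hl']
  exact ht

/-- The autarky argument: given a perfect matching between the variables of `S`
and the clauses touching `S`, the set is satisfiable. -/
lemma autarky {D : DNFSet V} (hD : IsKDNFSet 1 D)
    (hmin2 : ∀ F ∈ D, (∃ t ∈ F, t ≠ ∅) → Satisfiable (D.erase F))
    (hstruct : ∀ F ∈ D, ∀ t ∈ F, t ≠ ∅) (hFne : ∀ F ∈ D, F ≠ ∅)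
    {S : Finset V} (f : ↥S → DNF V) (hf : ∀ v, f v ∈ NSet D {v.1})
    (hsurj : ∀ F ∈ NSet D S, ∃ v, f v = F)
    (hSne : S.Nonempty) : Satisfiable D := by
  classical
  -- pick a clause in NSet D S and satisfy the rest
  obtain ⟨x, hxS⟩ := hSne
  have hC0 : (NSet D S).Nonempty := by
    have hfx := hf ⟨x, hxS⟩
    exact ⟨f ⟨x, hxS⟩, NSet_mono D (Finset.singleton_subset_iff.mpr hxS) hfx⟩
  obtain ⟨C0, hC0m⟩ := hC0
  have hC0D : C0 ∈ D := NSet_subset D S hC0m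
  have hC0ne : ∃ t ∈ C0, t ≠ ∅ := by
    obtain ⟨t, ht⟩ := Finset.nonempty_iff_ne_empty.mpr (hFne C0 hC0D)
    exact ⟨t, ht, hstruct C0 hC0D t ht⟩
  obtain ⟨β, hβ⟩ := hmin2 C0 hC0D hC0ne
  -- polarity choice
  set Q : V → Prop := fun y => ∃ b : Bool, ∃ hy : y ∈ S, ({(y, b)} : Trm V) ∈ f ⟨y, hy⟩
    with hQ
  set α : V → Bool := fun y => if h : Q y then h.choose else β y with hα
  have hQholds : ∀ v : ↥S, Q v.1 := by
    intro v
    have hfv := hf v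
    rw [mem_NSet] at hfv
    obtain ⟨hfvD, y, hyS, hyv⟩ := hfv
    have hyx : y = v.1 := Finset.mem_singleton.mp hyS
    subst hyx
    obtain ⟨b, hb⟩ := exists_polarity hD hfvD hyv
    exact ⟨b, v.2, hb⟩
  have hsatfv : ∀ v : ↥S, dnfSat α (f v) := by
    intro v
    have hq := hQholds v
    obtain ⟨hy, hmem⟩ := hq.choose_spec
    have hαv : α v.1 = hq.choose := by
      rw [hα]; exact dif_pos hq
    refine ⟨{(v.1, hq.choose)}, hmem, ?_⟩
    intro l hl
    rw [Finset.mem_singleton] at hl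
    subst hl
    generalize hgen : hq.choose = b at hαv ⊢
    cases b <;> simp [litEval, hαv]
  refine ⟨α, ?_⟩
  intro F hFD
  by_cases hFN : F ∈ NSet D S
  · obtain ⟨v, rfl⟩ := hsurj F hFN
    exact hsatfv v
  · have hFC0 : F ≠ C0 := fun h => hFN (h ▸ hC0m)
    have hFe : F ∈ D.erase C0 := Finset.mem_erase.mpr ⟨hFC0, hFD⟩
    obtain ⟨t, ht, htsat⟩ := hβ F hFe
    refine ⟨t, ht, ?_⟩
    intro l hl
    have hlS : l.1 ∉ S := by
      intro hlS
      apply hFN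
      rw [mem_NSet]
      exact ⟨hFD, l.1, hlS, mem_dnfVars.mpr ⟨t, ht, mem_trmVars.mpr ⟨l, hl, rfl⟩⟩⟩
    have hαl : α l.1 = β l.1 := by
      rw [hα]
      refine dif_neg ?_
      rintro ⟨b, hy, -⟩
      exact hlS hy
    have := htsat l hl
    simp only [litEval] at this ⊢
    rw [hαl]
    exact this

/-- The surplus lemma: every nonempty set `S` of variables of a minimal
unsatisfiable CNF touches strictly more than `|S|` clauses. -/
lemma surplus {D : DNFSet V} (hD : IsKDNFSet 1 D) (hunsat : ¬ Satisfiable D)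
    (hmin2 : ∀ F ∈ D, (∃ t ∈ F, t ≠ ∅) → Satisfiable (D.erase F))
    (hstruct : ∀ F ∈ D, ∀ t ∈ F, t ≠ ∅) (hFne : ∀ F ∈ D, F ≠ ∅) :
    ∀ S : Finset V, S ⊆ setVars D → S.Nonempty → S.card < (NSet D S).card := by
  classical
  intro S
  induction S using Finset.strongInduction with
  | _ S IH =>
    intro hsub hne
    by_contra hcon
    push_neg at hcon
    have hle : S.card ≤ (NSet D S).card := by
      obtain ⟨x, hx⟩ := hne
      rcases Finset.eq_empty_or_nonempty (S.erase x) with he | he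
      · have hSx : S = {x} := by
          apply Finset.eq_singleton_iff_unique_mem.mpr
          refine ⟨hx, fun y hy => ?_⟩
          by_contra hxy
          exact absurd (Finset.mem_erase.mpr ⟨hxy, hy⟩) (he ▸ Finset.notMem_empty y)
        obtain ⟨F, hF, hxF⟩ := mem_setVars.mp (hsub hx)
        have : F ∈ NSet D S := mem_NSet.mpr ⟨hF, x, hx, hxF⟩
        rw [hSx, Finset.card_singleton]
        exact Finset.card_pos.mpr ⟨F, hSx ▸ this⟩
      · have hss : S.erase x ⊂ S := Finset.erase_ssubset hx
        have h1 := IH _ hss ((Finset.erase_subset _ _).trans hsub) he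
        have h2 : (NSet D (S.erase x)).card ≤ (NSet D S).card :=
          Finset.card_le_card (NSet_mono D (Finset.erase_subset _ _))
        have h3 : (S.erase x).card = S.card - 1 := Finset.card_erase_of_mem hx
        have h4 : 1 ≤ S.card := Finset.card_pos.mpr ⟨x, hx⟩
        omega
    have hEq : (NSet D S).card = S.card := le_antisymm hcon hle
    have hall : ∀ s : Finset ↥S, s.card ≤ (s.biUnion fun v => NSet D {v.1}).card := by
      intro s
      have himg : s.biUnion (fun v => NSet D {v.1}) = NSet D (s.image Subtype.val) := by
        ext F
        simp only [Finset.mem_biUnion, mem_NSet, Finset.mem_image, Finset.mem_singleton]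
        constructor
        · rintro ⟨v, hv, hFD, y, rfl, hy⟩
          exact ⟨hFD, v.1, ⟨v, hv, rfl⟩, hy⟩
        · rintro ⟨hFD, y, ⟨v, hv, rfl⟩, hy⟩
          exact ⟨v, hv, hFD, v.1, rfl, hy⟩
      rw [himg]
      have hcards : (s.image Subtype.val).card = s.card :=
        Finset.card_image_of_injective _ Subtype.val_injective
      have hTsub : (s.image Subtype.val) ⊆ S := by
        intro y hy
        obtain ⟨v, _, rfl⟩ := Finset.mem_image.mp hy
        exact v.2
      rcases Finset.eq_empty_or_nonempty (s.image Subtype.val) with hT | hT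
      · rw [hT] at hcards
        simp [← hcards]
      · rcases eq_or_ne (s.image Subtype.val) S with hTS | hTS
        · rw [hTS] at hcards ⊢
          omega
        · have hss : (s.image Subtype.val) ⊂ S := ssubset_of_subset_of_ne hTsub hTS
          have := IH _ hss (hTsub.trans hsub) hT
          omega
    obtain ⟨f, hfinj, hfmem⟩ :=
      (Finset.all_card_le_biUnion_card_iff_exists_injective
        (fun v : ↥S => NSet D {v.1})).mp hall
    have hsurj : ∀ F ∈ NSet D S, ∃ v, f v = F := by
      have hsubim : Finset.univ.image f ⊆ NSet D S := by
        intro F hF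
        obtain ⟨v, _, rfl⟩ := Finset.mem_image.mp hF
        exact NSet_mono D (Finset.singleton_subset_iff.mpr v.2) (hfmem v)
      have hcardim : (Finset.univ.image f).card = S.card := by
        rw [Finset.card_image_of_injective _ hfinj, Finset.card_univ, Fintype.card_coe]
      have himeq : Finset.univ.image f = NSet D S :=
        Finset.eq_of_subset_of_card_le hsubim (by omega)
      intro F hF
      rw [← himeq] at hF
      obtain ⟨v, _, rfl⟩ := Finset.mem_image.mp hF
      exact ⟨v, rfl⟩
    exact hunsat (autarky hD hmin2 hstruct hFne f hfmem hsurj hne)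

/-- Core bound: a clause-minimal unsatisfiable genuine CNF has fewer variables
than clauses. -/
lemma core {D : DNFSet V} (hD : IsKDNFSet 1 D) (hunsat : ¬ Satisfiable D)
    (hmin2 : ∀ F ∈ D, (∃ t ∈ F, t ≠ ∅) → Satisfiable (D.erase F))
    (hstruct : ∀ F ∈ D, ∀ t ∈ F, t ≠ ∅) (hFne : ∀ F ∈ D, F ≠ ∅) :
    (setVars D).card < D.card := by
  rcases Finset.eq_empty_or_nonempty (setVars D) with hv | hv
  · rw [hv]
    simpa using Finset.card_pos.mpr (nonempty_of_unsat hunsat)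
  · have h1 := surplus hD hunsat hmin2 hstruct hFne (setVars D) Finset.Subset.rfl hv
    have h2 : (NSet D (setVars D)).card ≤ D.card :=
      Finset.card_le_card (NSet_subset D _)
    omega

end Aux

/-- If `D` is a minimally unsatisfiable 1-DNF set (i.e., a
minimally unsatisfiable CNF formula) consisting of `m` clauses, then the number of
variables occurring in `D` is at most `m - 1`. -/
theorem min_unsat_cnf_vars_le (D : DNFSet ℕ) (m : ℕ)
    (hD : IsKDNFSet 1 D) (hmin : MinUnsat D) (hm : D.card = m) :
    (setVars D).card ≤ m - 1 := by
  classical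
  subst hm
  obtain ⟨hunsat, hminw⟩ := hmin
  have hmin2 : ∀ F ∈ D, (∃ t ∈ F, t ≠ ∅) → Satisfiable (D.erase F) := by
    rintro F hF ⟨t, ht, htne⟩
    have h0 : (∅ : Trm ℕ) ⊂ t :=
      Finset.empty_ssubset.mpr (Finset.nonempty_iff_ne_empty.mpr htne)
    have hw := hminw F hF t ht ∅ h0
    exact sat_of_subset (by unfold weaken; exact Finset.subset_insert _ _) hw
  by_cases hec : (∅ : DNF ℕ) ∈ D
  · -- D contains the empty clause: no variables can occur
    have hv : setVars D = ∅ := by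
      rw [Finset.eq_empty_iff_forall_notMem]
      intro x hx
      obtain ⟨F, hF, hxF⟩ := mem_setVars.mp hx
      obtain ⟨t, ht, hxt⟩ := mem_dnfVars.mp hxF
      have htne : t ≠ ∅ := by
        intro h
        subst h
        simp [trmVars] at hxt
      obtain ⟨α, hα⟩ := hmin2 F hF ⟨t, ht, htne⟩
      have hFne' : F ≠ ∅ := by
        intro h
        subst h
        exact Finset.notMem_empty t ht
      have hmem : (∅ : DNF ℕ) ∈ D.erase F :=
        Finset.mem_erase.mpr ⟨Ne.symm hFne', hec⟩
      obtain ⟨t', ht', -⟩ := hα _ hmem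
      exact Finset.notMem_empty t' ht'
    rw [hv]
    simp
  · -- no empty clause
    have hmixed : ∀ F ∈ D, (∅ : Trm ℕ) ∈ F → F = {∅} := by
      intro F hF h0
      by_contra hne
      have hex : ∃ t ∈ F, t ≠ ∅ := by
        by_contra hall
        push_neg at hall
        apply hne
        apply Finset.eq_singleton_iff_unique_mem.mpr
        exact ⟨h0, hall⟩
      obtain ⟨α, hα⟩ := hmin2 F hF hex
      apply hunsat
      refine ⟨α, fun G hG => ?_⟩
      by_cases hGF : G = F
      · subst hGF
        exact ⟨∅, h0, fun l hl => absurd hl (Finset.notMem_empty l)⟩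
      · exact hα G (Finset.mem_erase.mpr ⟨hGF, hG⟩)
    by_cases ht1 : ({∅} : DNF ℕ) ∈ D
    · set D' := D.erase ({∅} : DNF ℕ) with hD'def
      have hsubD : D' ⊆ D := Finset.erase_subset _ _
      have hD' : IsKDNFSet 1 D' := fun F hF => hD F (hsubD hF)
      have hunsat' : ¬ Satisfiable D' := by
        rintro ⟨α, hα⟩
        apply hunsat
        refine ⟨α, fun F hF => ?_⟩
        by_cases hFt : F = ({∅} : DNF ℕ)
        · subst hFt
          exact ⟨∅, Finset.mem_singleton_self _,
            fun l hl => absurd hl (Finset.notMem_empty l)⟩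
        · exact hα F (Finset.mem_erase.mpr ⟨hFt, hF⟩)
      have hmin2' : ∀ F ∈ D', (∃ t ∈ F, t ≠ ∅) → Satisfiable (D'.erase F) := by
        intro F hF h
        have := hmin2 F (hsubD hF) h
        exact sat_of_subset (Finset.erase_subset_erase _ hsubD) this
      have hstruct' : ∀ F ∈ D', ∀ t ∈ F, t ≠ ∅ := by
        intro F hF t ht h0
        subst h0
        have := hmixed F (hsubD hF) ht
        exact (Finset.mem_erase.mp hF).1 this
      have hFne' : ∀ F ∈ D', F ≠ ∅ := fun F hF h => hec (h ▸ hsubD hF)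
      have hcore := core hD' hunsat' hmin2' hstruct' hFne'
      have hvars : setVars D' = setVars D := by
        apply Finset.Subset.antisymm
        · intro x hx
          obtain ⟨F, hF, hxF⟩ := mem_setVars.mp hx
          exact mem_setVars.mpr ⟨F, hsubD hF, hxF⟩
        · intro x hx
          obtain ⟨F, hF, hxF⟩ := mem_setVars.mp hx
          by_cases hFt : F = ({∅} : DNF ℕ)
          · subst hFt
            simp [dnfVars, trmVars] at hxF
          · exact mem_setVars.mpr ⟨F, Finset.mem_erase.mpr ⟨hFt, hF⟩, hxF⟩
      have hcard : D'.card < D.card := Finset.card_erase_lt_of_mem ht1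
      rw [← hvars]
      omega
    · have hstruct : ∀ F ∈ D, ∀ t ∈ F, t ≠ ∅ := by
        intro F hF t ht h0
        subst h0
        exact ht1 (hmixed F hF ht ▸ hF)
      have hFne : ∀ F ∈ D, F ≠ ∅ := fun F hF h => hec (h ▸ hF)
      have := core hD hunsat hmin2 hstruct hFne
      omega

end PaperKDNF
end

section
/- For every k ≥ 1 and every N there exists a minimally unsatisfiable k-DNF set D with |D| ≥ N formulas such that |vars(D)| ≥ k² (|D| − 1). -/
namespace PaperKDNF

/-! ### Construction -/

variable (k : ℕ)

/-- variable encoding: block `i`, row `a`, column `b` (with `a b < k`). -/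
def enc (i a b : ℕ) : ℕ := b + k * (a + k * i)

lemma split_eq {b s b' s' : ℕ} (hb : b < k) (hb' : b' < k)
    (h : b + k * s = b' + k * s') : b = b' ∧ s = s' := by
  have hk : 0 < k := Nat.lt_of_le_of_lt (Nat.zero_le b) hb
  have h1 : b = b' := by
    have := congrArg (· % k) h
    simpa [Nat.add_mul_mod_self_left, Nat.mod_eq_of_lt hb, Nat.mod_eq_of_lt hb'] using this
  subst h1
  have h2 : k * s = k * s' := by omega
  exact ⟨rfl, Nat.eq_of_mul_eq_mul_left hk h2⟩

lemma enc_inj {i a b i' a' b' : ℕ} (ha : a < k) (hb : b < k)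
    (ha' : a' < k) (hb' : b' < k) (h : enc k i a b = enc k i' a' b') :
    i = i' ∧ a = a' ∧ b = b' := by
  obtain ⟨h1, h2⟩ := split_eq k hb hb' h
  obtain ⟨h3, h4⟩ := split_eq k ha ha' h2
  exact ⟨h4, h3, h1⟩

/-- assignment defined from a rule on (block, row, column). -/
def asg (ρ : ℕ → ℕ → ℕ → Bool) (n : ℕ) : Bool := ρ (n / k / k) (n / k % k) (n % k)

lemma asg_enc (ρ : ℕ → ℕ → ℕ → Bool) {i a b : ℕ} (ha : a < k) (hb : b < k) :
    asg k ρ (enc k i a b) = ρ i a b := by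
  have hk : 0 < k := Nat.lt_of_le_of_lt (Nat.zero_le b) hb
  have h1 : enc k i a b % k = b := by
    simp [enc, Nat.add_mul_mod_self_left, Nat.mod_eq_of_lt hb]
  have h2 : enc k i a b / k = a + k * i := by
    simp [enc, Nat.add_mul_div_left _ _ hk, Nat.div_eq_of_lt hb]
  rw [asg, h1, h2]
  rw [Nat.add_mul_mod_self_left, Nat.mod_eq_of_lt ha,
    Nat.add_mul_div_left _ _ hk, Nat.div_eq_of_lt ha, Nat.zero_add]

/-- The positive term `x_{i,a,1} ∧ ... ∧ x_{i,a,k}`. -/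
def Aterm (i a : ℕ) : Trm ℕ := (Finset.range k).image (fun b => (enc k i a b, true))

/-- The negative term given by a choice function `f`. -/
def Tterm (i : ℕ) (f : Fin k → Fin k) : Trm ℕ :=
  Finset.univ.image (fun a : Fin k => (enc k i (a : ℕ) ((f a : ℕ)), false))

/-- The formula `X_i`. -/
def posF (i : ℕ) : DNF ℕ := (Finset.range k).image (Aterm k i)

/-- The formula `¬ X_i`. -/
def negF (i : ℕ) : DNF ℕ := Finset.univ.image (Tterm k i)

/-- The semantic super-variable. -/
def Pp (α : ℕ → Bool) (i : ℕ) : Prop := ∃ a < k, ∀ b < k, α (enc k i a b) = true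

lemma mem_Aterm {l : Lit ℕ} {i a : ℕ} :
    l ∈ Aterm k i a ↔ ∃ b < k, l = (enc k i a b, true) := by
  simp [Aterm, eq_comm]

lemma mem_Tterm {l : Lit ℕ} {i : ℕ} {f : Fin k → Fin k} :
    l ∈ Tterm k i f ↔ ∃ a : Fin k, l = (enc k i (a : ℕ) ((f a : ℕ)), false) := by
  simp [Tterm, eq_comm]

lemma sat_posF_iff {α : ℕ → Bool} {i : ℕ} : dnfSat α (posF k i) ↔ Pp k α i := by
  constructor
  · rintro ⟨t, ht, hsat⟩
    simp only [posF, Finset.mem_image, Finset.mem_range] at ht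
    obtain ⟨a, ha, rfl⟩ := ht
    refine ⟨a, ha, fun b hb => ?_⟩
    have := hsat (enc k i a b, true) ((mem_Aterm k).mpr ⟨b, hb, rfl⟩)
    simpa [litEval] using this
  · rintro ⟨a, ha, h⟩
    refine ⟨Aterm k i a, ?_, ?_⟩
    · exact Finset.mem_image_of_mem _ (Finset.mem_range.mpr ha)
    · intro l hl
      obtain ⟨b, hb, rfl⟩ := (mem_Aterm k).mp hl
      simpa [litEval] using h b hb

lemma sat_negF_iff {α : ℕ → Bool} {i : ℕ} :
    dnfSat α (negF k i) ↔ ¬ Pp k α i := by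
  constructor
  · rintro ⟨t, ht, hsat⟩ ⟨a, ha, hall⟩
    simp only [negF, Finset.mem_image, Finset.mem_univ, true_and] at ht
    obtain ⟨f, rfl⟩ := ht
    have := hsat (enc k i a ((f ⟨a, ha⟩ : ℕ)), false)
      ((mem_Tterm k).mpr ⟨⟨a, ha⟩, rfl⟩)
    have hfa := hall ((f ⟨a, ha⟩ : ℕ)) (f ⟨a, ha⟩).isLt
    simp [litEval, hfa] at this
  · intro h
    have h' : ∀ a : Fin k, ∃ b : Fin k, α (enc k i (a : ℕ) (b : ℕ)) = false := by
      intro a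
      by_contra hc
      push_neg at hc
      exact h ⟨a, a.isLt, fun b hb => by
        have := hc ⟨b, hb⟩
        simpa [Bool.not_eq_false] using this⟩
    choose f hf using h'
    refine ⟨Tterm k i f, Finset.mem_image_of_mem _ (Finset.mem_univ f), ?_⟩
    intro l hl
    obtain ⟨a, rfl⟩ := (mem_Tterm k).mp hl
    simp [litEval, hf a]

variable (m : ℕ)

/-- The formulas of the minimally unsatisfiable set. -/
def Gf (j : ℕ) : DNF ℕ :=
  if j = 0 then posF k 0
  else if j = m - 1 then negF k (m - 2)
  else negF k (j - 1) ∪ posF k j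

/-- The minimally unsatisfiable set itself. -/
def Dset : DNFSet ℕ := (Finset.range m).image (Gf k m)

lemma Gf_zero : Gf k m 0 = posF k 0 := by simp [Gf]

lemma Gf_last (hm : 2 ≤ m) : Gf k m (m - 1) = negF k (m - 2) := by
  have : m - 1 ≠ 0 := by omega
  simp [Gf, this]

lemma Gf_mid {j : ℕ} (hj0 : j ≠ 0) (hj1 : j ≤ m - 2) (hm : 2 ≤ m) :
    Gf k m j = negF k (j - 1) ∪ posF k j := by
  have h1 : j ≠ m - 1 := by omega
  simp [Gf, hj0, h1]

lemma dnfSat_union {α : ℕ → Bool} {F G : DNF ℕ} :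
    dnfSat α (F ∪ G) ↔ dnfSat α F ∨ dnfSat α G := by
  simp [dnfSat, Finset.mem_union, or_and_right, exists_or]

lemma pos_subset_Gf (hm : 2 ≤ m) {j : ℕ} (hj : j ≤ m - 2) :
    posF k j ⊆ Gf k m j := by
  rcases Nat.eq_zero_or_pos j with rfl | hj0
  · rw [Gf_zero]
  · rw [Gf_mid k m (by omega) hj hm]
    exact Finset.subset_union_right

lemma mem_Gf_cases (hm : 2 ≤ m) {j : ℕ} (hj : j < m) {t : Trm ℕ}
    (ht : t ∈ Gf k m j) :
    (j ≤ m - 2 ∧ ∃ a < k, t = Aterm k j a) ∨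
    (1 ≤ j ∧ ∃ f : Fin k → Fin k, t = Tterm k (j - 1) f) := by
  unfold Gf at ht
  split_ifs at ht with h0 h1
  · subst h0
    left
    refine ⟨by omega, ?_⟩
    simpa [posF, eq_comm] using ht
  · right
    refine ⟨by omega, ?_⟩
    rw [h1]
    have : m - 1 - 1 = m - 2 := by omega
    rw [this]
    simpa [negF, eq_comm] using ht
  · rw [Finset.mem_union] at ht
    rcases ht with ht | ht
    · right
      exact ⟨by omega, by simpa [negF, eq_comm] using ht⟩
    · left
      exact ⟨by omega, by simpa [posF, eq_comm] using ht⟩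

/-- Crossover satisfaction lemma: if `Pp α i` holds exactly for `i < c`,
then all formulas `Gf j'` with `j' ≠ c` are satisfied
(provided `c ≤ m-2` whenever `j' = m-1`). -/
lemma sat_Gf (hm : 2 ≤ m) (hk : 0 < k) {α : ℕ → Bool} {c j' : ℕ}
    (hα : ∀ i, Pp k α i ↔ i < c) (hj' : j' < m) (hne : j' ≠ c)
    (hlast : j' = m - 1 → c ≤ m - 2) :
    dnfSat α (Gf k m j') := by
  unfold Gf
  split_ifs with h0 h1
  · rw [sat_posF_iff, hα]
    omega
  · rw [sat_negF_iff, hα]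
    have := hlast h1
    omega
  · rw [dnfSat_union]
    rcases lt_or_gt_of_ne hne with h | h
    · right
      rw [sat_posF_iff, hα]
      exact h
    · left
      rw [sat_negF_iff, hα]
      omega

lemma Gf_mem_Dset {j : ℕ} (hj : j < m) : Gf k m j ∈ Dset k m :=
  Finset.mem_image_of_mem _ (Finset.mem_range.mpr hj)

/-! ### Unsatisfiability -/

lemma unsat_Dset (hm : 2 ≤ m) (hk : 0 < k) : ¬ Satisfiable (Dset k m) := by
  rintro ⟨α, hα⟩
  have key : ∀ j, j ≤ m - 2 → Pp k α j := by
    intro j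
    induction j with
    | zero =>
      intro _
      have := hα _ (Gf_mem_Dset k m (show 0 < m by omega))
      rw [Gf_zero, sat_posF_iff] at this
      exact this
    | succ n ih =>
      intro hj
      have hn : n ≤ m - 2 := by omega
      have hmem := hα _ (Gf_mem_Dset k m (show n + 1 < m by omega))
      rw [Gf_mid k m (by omega) hj hm, dnfSat_union] at hmem
      rcases hmem with h | h
      · rw [sat_negF_iff] at h
        simp at h
        exact absurd (ih hn) h
      · rw [sat_posF_iff] at h
        exact h
  have h1 := key (m - 2) le_rfl
  have h2 := hα _ (Gf_mem_Dset k m (show m - 1 < m by omega))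
  rw [Gf_last k m hm, sat_negF_iff] at h2
  exact h2 h1

/-! ### Injectivity of `Gf` and cardinality of `Dset` -/

lemma Aterm_detect (hm : 2 ≤ m) (hk : 0 < k) {i a j : ℕ} (ha : a < k)
    (hj : j < m) (h : Aterm k i a ∈ Gf k m j) : i = j := by
  have hmem : (enc k i a 0, true) ∈ Aterm k i a := (mem_Aterm k).mpr ⟨0, hk, rfl⟩
  rcases mem_Gf_cases k m hm hj h with ⟨_, a', ha', heq⟩ | ⟨_, f, heq⟩
  · rw [heq] at hmem
    obtain ⟨b, hb, hbe⟩ := (mem_Aterm k).mp hmem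
    have := (enc_inj k ha hk ha' hb (congrArg Prod.fst hbe)).1
    exact this
  · rw [heq] at hmem
    obtain ⟨a', hbe⟩ := (mem_Tterm k).mp hmem
    exact absurd (congrArg Prod.snd hbe) (by simp)

lemma Gf_injOn (hm : 2 ≤ m) (hk : 0 < k) {j1 j2 : ℕ} (h1 : j1 < m) (h2 : j2 < m)
    (h : Gf k m j1 = Gf k m j2) : j1 = j2 := by
  have key : ∀ j j' : ℕ, j < m → j' < m → j ≤ m - 2 → Gf k m j = Gf k m j' → j = j' := by
    intro j j' hj hj' hj2 he
    have hmm : Aterm k j 0 ∈ Gf k m j :=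
      pos_subset_Gf k m hm hj2 (Finset.mem_image_of_mem _ (Finset.mem_range.mpr hk))
    rw [he] at hmm
    exact Aterm_detect k m hm hk hk hj' hmm
  rcases le_or_gt j1 (m - 2) with hj1 | hj1
  · exact key j1 j2 h1 h2 hj1 h
  · rcases le_or_gt j2 (m - 2) with hj2 | hj2
    · exact (key j2 j1 h2 h1 hj2 h.symm).symm
    · omega

lemma card_Dset (hm : 2 ≤ m) (hk : 0 < k) : (Dset k m).card = m := by
  rw [Dset, Finset.card_image_of_injOn, Finset.card_range]
  intro j1 hj1 j2 hj2 h
  exact Gf_injOn k m hm hk (Finset.mem_range.mp hj1) (Finset.mem_range.mp hj2) h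

/-! ### Variable count -/

lemma var_mem_setVars (hm : 2 ≤ m) {i a b : ℕ} (hi : i < m - 1) (ha : a < k)
    (hb : b < k) : enc k i a b ∈ setVars (Dset k m) := by
  rw [setVars, Finset.mem_biUnion]
  refine ⟨Gf k m i, Gf_mem_Dset k m (by omega), ?_⟩
  rw [dnfVars, Finset.mem_biUnion]
  refine ⟨Aterm k i a, pos_subset_Gf k m hm (by omega)
    (Finset.mem_image_of_mem _ (Finset.mem_range.mpr ha)), ?_⟩
  rw [trmVars, Finset.mem_image]
  exact ⟨(enc k i a b, true), (mem_Aterm k).mpr ⟨b, hb, rfl⟩, rfl⟩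

lemma vars_card (hm : 2 ≤ m) (hk : 0 < k) :
    k ^ 2 * (m - 1) ≤ (setVars (Dset k m)).card := by
  classical
  set S : Finset (ℕ × ℕ × ℕ) :=
    Finset.range (m - 1) ×ˢ (Finset.range k ×ˢ Finset.range k) with hS
  have hsub : S.image (fun p => enc k p.1 p.2.1 p.2.2) ⊆ setVars (Dset k m) := by
    intro x hx
    rw [Finset.mem_image] at hx
    obtain ⟨p, hp, rfl⟩ := hx
    simp only [hS, Finset.mem_product, Finset.mem_range] at hp
    exact var_mem_setVars k m hm hp.1 hp.2.1 hp.2.2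
  have hinj : Set.InjOn (fun p : ℕ × ℕ × ℕ => enc k p.1 p.2.1 p.2.2) S := by
    intro p hp q hq h
    simp only [hS, Finset.coe_product, Set.mem_prod, Finset.mem_coe,
      Finset.mem_range] at hp hq
    obtain ⟨h1, h2, h3⟩ := enc_inj k hp.2.1 hp.2.2 hq.2.1 hq.2.2 h
    exact Prod.ext h1 (Prod.ext h2 h3)
  have hcard : (S.image (fun p => enc k p.1 p.2.1 p.2.2)).card = (m - 1) * (k * k) := by
    rw [Finset.card_image_of_injOn hinj, hS]
    simp [Finset.card_product]
  calc k ^ 2 * (m - 1) = (m - 1) * (k * k) := by ring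
    _ = (S.image (fun p => enc k p.1 p.2.1 p.2.2)).card := hcard.symm
    _ ≤ (setVars (Dset k m)).card := Finset.card_le_card hsub

/-! ### Minimality -/

lemma min_Dset (hm : 2 ≤ m) (hk : 0 < k) :
    ∀ F ∈ Dset k m, ∀ t ∈ F, ∀ t' ⊂ t, Satisfiable (weaken (Dset k m) F t t') := by
  intro F hF t ht t' hss
  rw [Dset, Finset.mem_image] at hF
  obtain ⟨j, hjr, rfl⟩ := hF
  rw [Finset.mem_range] at hjr
  obtain ⟨l0, hl0t, hl0t'⟩ := Finset.exists_of_ssubset hss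
  have hsub : t' ⊆ t := hss.subset
  rcases mem_Gf_cases k m hm hjr ht with ⟨hj2, a, ha, rfl⟩ | ⟨hj1, f, rfl⟩
  · -- case 1: t = Aterm k j a
    obtain ⟨b0, hb0, rfl⟩ := (mem_Aterm k).mp hl0t
    set ρ : ℕ → ℕ → ℕ → Bool := fun i' a' b' =>
      if i' < j then true else if i' = j then decide (a' = a ∧ b' ≠ b0) else false with hρ
    set α := asg k ρ with hα
    have hval : ∀ i' a' b', a' < k → b' < k → α (enc k i' a' b') = ρ i' a' b' := by
      intro i' a' b' ha' hb'
      exact asg_enc k ρ ha' hb'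
    have hρlt : ∀ x y z, x < j → ρ x y z = true := by
      intro x y z hx
      simp only [hρ]
      rw [if_pos hx]
    have hρgt : ∀ x y z, j < x → ρ x y z = false := by
      intro x y z hx
      simp only [hρ]
      rw [if_neg (by omega), if_neg (by omega)]
    have hρeq : ∀ y z, ρ j y z = decide (y = a ∧ z ≠ b0) := by
      intro y z
      simp [hρ]
    have hcross : ∀ i', Pp k α i' ↔ i' < j := by
      intro i'
      constructor
      · rintro ⟨a'', ha'', hall⟩
        by_contra hlt
        push_neg at hlt
        rcases Nat.lt_or_ge j i' with hgt | hge
        · have := hall 0 hk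
          rw [hval i' a'' 0 ha'' hk, hρgt i' a'' 0 hgt] at this
          exact absurd this (by simp)
        · have hij : i' = j := by omega
          by_cases haa : a'' = a
          · have := hall b0 hb0
            rw [hval i' a'' b0 ha'' hb0, hij, hρeq a'' b0] at this
            simp [haa] at this
          · have := hall 0 hk
            rw [hval i' a'' 0 ha'' hk, hij, hρeq a'' 0] at this
            simp [haa] at this
      · intro hlt
        refine ⟨0, hk, fun b hb => ?_⟩
        rw [hval i' 0 b hk hb, hρlt i' 0 b hlt]
    have hts : trmSat α t' := by
      intro l hl
      obtain ⟨b, hb, rfl⟩ := (mem_Aterm k).mp (hsub hl)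
      have hbne : b ≠ b0 := by
        rintro rfl
        exact hl0t' hl
      have hv := hval j a b ha hb
      rw [hρeq a b] at hv
      simp only [litEval, hv]
      simp [hbne]
    refine ⟨α, ?_⟩
    intro H hH
    rw [weaken, Finset.mem_insert] at hH
    rcases hH with rfl | hH
    · exact ⟨t', Finset.mem_insert_self _ _, hts⟩
    · rw [Finset.mem_erase] at hH
      obtain ⟨hne, hmem⟩ := hH
      rw [Dset, Finset.mem_image] at hmem
      obtain ⟨j', hj', rfl⟩ := hmem
      rw [Finset.mem_range] at hj'
      refine sat_Gf k m hm hk hcross hj' (fun h => hne (by rw [h])) (fun _ => hj2)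
  · -- case 2: t = Tterm k (j-1) f
    obtain ⟨a0, rfl⟩ := (mem_Tterm k).mp hl0t
    set ρ : ℕ → ℕ → ℕ → Bool := fun i' a' _ =>
      if i' < j - 1 then true else if i' = j - 1 then decide (a' = (a0 : ℕ)) else false with hρ
    set α := asg k ρ with hα
    have hval : ∀ i' a' b', a' < k → b' < k → α (enc k i' a' b') = ρ i' a' b' := by
      intro i' a' b' ha' hb'
      exact asg_enc k ρ ha' hb'
    have hρlt : ∀ x y z, x < j - 1 → ρ x y z = true := by
      intro x y z hx
      simp only [hρ]
      rw [if_pos hx]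
    have hρgt : ∀ x y z, j - 1 < x → ρ x y z = false := by
      intro x y z hx
      simp only [hρ]
      rw [if_neg (by omega), if_neg (by omega)]
    have hρeq : ∀ y z, ρ (j - 1) y z = decide (y = (a0 : ℕ)) := by
      intro y z
      simp [hρ]
    have hcross : ∀ i', Pp k α i' ↔ i' < j := by
      intro i'
      constructor
      · rintro ⟨a'', ha'', hall⟩
        by_contra hlt
        push_neg at hlt
        have := hall 0 hk
        rw [hval i' a'' 0 ha'' hk, hρgt i' a'' 0 (by omega)] at this
        exact absurd this (by simp)
      · intro hlt
        rcases Nat.lt_or_ge i' (j - 1) with hl1 | hl1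
        · refine ⟨0, hk, fun b hb => ?_⟩
          rw [hval i' 0 b hk hb, hρlt i' 0 b hl1]
        · have hij : i' = j - 1 := by omega
          refine ⟨(a0 : ℕ), a0.isLt, fun b hb => ?_⟩
          rw [hval i' (a0 : ℕ) b a0.isLt hb, hij, hρeq (a0 : ℕ) b]
          simp
    have hts : trmSat α t' := by
      intro l hl
      obtain ⟨a', rfl⟩ := (mem_Tterm k).mp (hsub hl)
      have hane : a' ≠ a0 := by
        rintro rfl
        exact hl0t' hl
      have hv := hval (j - 1) (a' : ℕ) ((f a' : ℕ)) a'.isLt (f a').isLt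
      rw [hρeq (a' : ℕ) ((f a' : ℕ))] at hv
      have hv2 : α (enc k (j - 1) (a' : ℕ) ((f a' : ℕ))) = false := by
        rw [hv]
        simp only [decide_eq_false_iff_not]
        intro hcc
        exact hane (Fin.ext hcc)
      simp only [litEval, hv2]
      simp
    refine ⟨α, ?_⟩
    intro H hH
    rw [weaken, Finset.mem_insert] at hH
    rcases hH with rfl | hH
    · exact ⟨t', Finset.mem_insert_self _ _, hts⟩
    · rw [Finset.mem_erase] at hH
      obtain ⟨hne, hmem⟩ := hH
      rw [Dset, Finset.mem_image] at hmem
      obtain ⟨j', hj', rfl⟩ := hmem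
      rw [Finset.mem_range] at hj'
      have hnej : j' ≠ j := fun h => hne (by rw [h])
      refine sat_Gf k m hm hk hcross hj' hnej (fun hjl => ?_)
      omega

/-! ### k-DNF property -/

lemma kdnf_Dset (hm : 2 ≤ m) : IsKDNFSet k (Dset k m) := by
  intro F hF t ht
  rw [Dset, Finset.mem_image] at hF
  obtain ⟨j, hjr, rfl⟩ := hF
  rw [Finset.mem_range] at hjr
  rcases mem_Gf_cases k m hm hjr ht with ⟨_, a, _, rfl⟩ | ⟨_, f, rfl⟩
  · calc (Aterm k j a).card ≤ (Finset.range k).card := Finset.card_image_le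
      _ = k := Finset.card_range k
  · calc (Tterm k (j - 1) f).card ≤ (Finset.univ : Finset (Fin k)).card :=
        Finset.card_image_le
      _ = k := by simp

/-- For every `k ≥ 1` and every `N` there exists a minimally
unsatisfiable `k`-DNF set `D` with `|D| ≥ N` formulas such that
`|vars(D)| ≥ k²(|D| - 1)`. -/
theorem exists_min_unsat_kDNF_many_vars (k N : ℕ) (hk : 1 ≤ k) :
    ∃ D : DNFSet ℕ, IsKDNFSet k D ∧ MinUnsat D ∧ N ≤ D.card ∧
      k^2 * (D.card - 1) ≤ (setVars D).card := by
  have hm : 2 ≤ N + 2 := by omega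
  have hk0 : 0 < k := hk
  refine ⟨Dset k (N + 2), kdnf_Dset k (N + 2) hm,
    ⟨unsat_Dset k (N + 2) hm hk0, min_Dset k (N + 2) hm hk0⟩, ?_, ?_⟩
  · rw [card_Dset k (N + 2) hm hk0]
    omega
  · rw [card_Dset k (N + 2) hm hk0]
    have : N + 2 - 1 = N + 1 := by omega
    rw [this]
    have := vars_card k (N + 2) hm hk0
    have h2 : N + 2 - 1 = N + 1 := by omega
    rw [h2] at this
    exact this


end PaperKDNF
end

section
/- For every k ≥ 2 and every N there exists a minimally unsatisfiable k-DNF set D with m = |D| ≥ N formulas such that |vars(D)| > (m/8)^k. -/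
namespace PaperKDNF

/-- variable universe -/
abbrev W (K S : ℕ) : Type := (Fin K × ℕ) ⊕ ((Fin K × ℕ) ⊕ ((Fin K → Fin S) × Fin S))

noncomputable def emb (K S : ℕ) : W K S ↪ ℕ := (nonempty_embedding_nat (W K S)).some

noncomputable def Y (S : ℕ) {K : ℕ} (i : Fin K) (j : ℕ) : ℕ := emb K S (Sum.inl (i, j))
noncomputable def Z (S : ℕ) {K : ℕ} (i : Fin K) (j : ℕ) : ℕ := emb K S (Sum.inr (Sum.inl (i, j)))
noncomputable def X {K S : ℕ} (a : Fin K → Fin S) (c : Fin S) : ℕ := emb K S (Sum.inr (Sum.inr (a, c)))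

@[simp] lemma Y_inj {K S : ℕ} {i i' : Fin K} {j j' : ℕ} :
    Y S i j = Y S i' j' ↔ i = i' ∧ j = j' := by
  simp [Y]

@[simp] lemma Z_inj {K S : ℕ} {i i' : Fin K} {j j' : ℕ} :
    Z S i j = Z S i' j' ↔ i = i' ∧ j = j' := by
  simp [Z]

@[simp] lemma X_inj {K S : ℕ} {a a' : Fin K → Fin S} {c c' : Fin S} :
    X a c = X a' c' ↔ a = a' ∧ c = c' := by
  simp [X]

@[simp] lemma Y_ne_Z {K S : ℕ} {i i' : Fin K} {j j' : ℕ} : Y S i j ≠ Z S i' j' := by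
  simp [Y, Z]

@[simp] lemma Y_ne_X {K S : ℕ} {i : Fin K} {j : ℕ} {a : Fin K → Fin S} {c : Fin S} :
    Y S i j ≠ X a c := by
  simp [Y, X]

@[simp] lemma Z_ne_X {K S : ℕ} {i : Fin K} {j : ℕ} {a : Fin K → Fin S} {c : Fin S} :
    Z S i j ≠ X a c := by
  simp [Z, X]

@[simp] lemma Z_ne_Y {K S : ℕ} {i i' : Fin K} {j j' : ℕ} : Z S i j ≠ Y S i' j' := by
  simp [Y, Z]

@[simp] lemma X_ne_Y {K S : ℕ} {i : Fin K} {j : ℕ} {a : Fin K → Fin S} {c : Fin S} :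
    X a c ≠ Y S i j := by
  simp [Y, X]

@[simp] lemma X_ne_Z {K S : ℕ} {i : Fin K} {j : ℕ} {a : Fin K → Fin S} {c : Fin S} :
    X a c ≠ Z S i j := by
  simp [Z, X]

open Classical in
/-- assignment builder -/
noncomputable def mk {K S : ℕ} (P Q : Fin K → ℕ → Bool)
    (ξ : (Fin K → Fin S) → Fin S → Bool) : ℕ → Bool :=
  fun n =>
    if h : ∃ w : W K S, emb K S w = n then
      (match Classical.choose h with
       | Sum.inl (i, j) => P i j
       | Sum.inr (Sum.inl (i, j)) => Q i j
       | Sum.inr (Sum.inr (a, c)) => ξ a c)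
    else false

lemma mk_emb {K S : ℕ} (P Q : Fin K → ℕ → Bool) (ξ) (w : W K S) :
    mk P Q ξ (emb K S w) =
      (match w with
       | Sum.inl (i, j) => P i j
       | Sum.inr (Sum.inl (i, j)) => Q i j
       | Sum.inr (Sum.inr (a, c)) => ξ a c) := by
  have h : ∃ w' : W K S, emb K S w' = emb K S w := ⟨w, rfl⟩
  have hc : Classical.choose h = w := (emb K S).injective (Classical.choose_spec h)
  rw [mk, dif_pos h, hc]

@[simp] lemma mk_Y {K S : ℕ} (P Q : Fin K → ℕ → Bool) (ξ) (i : Fin K) (j : ℕ) :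
    mk (S := S) P Q ξ (Y S i j) = P i j := mk_emb P Q ξ _

@[simp] lemma mk_Z {K S : ℕ} (P Q : Fin K → ℕ → Bool) (ξ) (i : Fin K) (j : ℕ) :
    mk (S := S) P Q ξ (Z S i j) = Q i j := mk_emb P Q ξ _

@[simp] lemma mk_X {K S : ℕ} (P Q : Fin K → ℕ → Bool) (ξ) (a : Fin K → Fin S) (c : Fin S) :
    mk P Q ξ (X a c) = ξ a c := mk_emb P Q ξ _


/-! ### Terms and formulas of the construction -/

noncomputable def sel {K S : ℕ} (a : Fin K → Fin S) : Trm ℕ :=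
  Finset.univ.image (fun i : Fin K => ((Y S i (a i) : ℕ), true))

noncomputable def tA {K S : ℕ} (a : Fin K → Fin S) (c : Fin S) : Trm ℕ :=
  insert ((X a c : ℕ), true) (sel a)

noncomputable def tB {K S : ℕ} (a : Fin K → Fin S) (c : Fin S) : Trm ℕ :=
  insert ((X a c : ℕ), false) (sel a)

noncomputable def tM1 (S : ℕ) {K : ℕ} (j : ℕ) (f : Fin K → Bool) : Trm ℕ :=
  Finset.univ.image (fun i : Fin K =>
    if f i then ((Z S i j : ℕ), true) else ((Y S i j : ℕ), false))

noncomputable def tM2 (S : ℕ) {K : ℕ} (j : ℕ) (f : Fin K → Bool) : Trm ℕ :=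
  Finset.univ.image (fun i : Fin K =>
    if f i then ((Z S i (j-1) : ℕ), false) else ((Z S i j : ℕ), true))

noncomputable def tM3 (S : ℕ) {K : ℕ} (j : ℕ) (f : Fin K → Bool) : Trm ℕ :=
  Finset.univ.image (fun i : Fin K =>
    if f i then ((Z S i (j-1) : ℕ), false) else ((Y S i j : ℕ), false))

noncomputable def FA (K S : ℕ) : DNF ℕ :=
  Finset.univ.image (fun p : (Fin K → Fin S) × Fin S => tA p.1 p.2)

noncomputable def FB (K : ℕ) {S : ℕ} (c : Fin S) : DNF ℕ :=
  Finset.univ.image (fun a : Fin K → Fin S => tB a c)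

noncomputable def FM1 (K S : ℕ) (j : ℕ) : DNF ℕ :=
  Finset.univ.image (fun f : Fin K → Bool => tM1 S j f)

noncomputable def FM2 (K S : ℕ) (j : ℕ) : DNF ℕ :=
  Finset.univ.image (fun f : Fin K → Bool => tM2 S j f)

noncomputable def FM3 (K S : ℕ) (j : ℕ) : DNF ℕ :=
  Finset.univ.image (fun f : Fin K → Bool => tM3 S j f)

noncomputable def DD (K S : ℕ) : DNFSet ℕ :=
  insert (FA K S)
    ((Finset.univ.image (FB K (S := S))) ∪
     ((Finset.range (S-1)).image (FM1 K S)) ∪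
     ((Finset.Ico 1 (S-1)).image (FM2 K S)) ∪
     ((Finset.Ico 1 S).image (FM3 K S)))

lemma FA_mem (K S : ℕ) : FA K S ∈ DD K S := Finset.mem_insert_self _ _

lemma FB_mem (K : ℕ) {S : ℕ} (c : Fin S) : FB K c ∈ DD K S := by
  apply Finset.mem_insert_of_mem
  simp only [Finset.mem_union]
  exact Or.inl (Or.inl (Or.inl (Finset.mem_image_of_mem _ (Finset.mem_univ c))))

lemma FM1_mem (K : ℕ) {S : ℕ} {j : ℕ} (hj : j < S - 1) : FM1 K S j ∈ DD K S := by
  apply Finset.mem_insert_of_mem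
  simp only [Finset.mem_union]
  exact Or.inl (Or.inl (Or.inr (Finset.mem_image_of_mem _ (Finset.mem_range.2 hj))))

lemma FM2_mem (K : ℕ) {S : ℕ} {j : ℕ} (h1 : 1 ≤ j) (hj : j < S - 1) : FM2 K S j ∈ DD K S := by
  apply Finset.mem_insert_of_mem
  simp only [Finset.mem_union]
  exact Or.inl (Or.inr (Finset.mem_image_of_mem _ (Finset.mem_Ico.2 ⟨h1, hj⟩)))

lemma FM3_mem (K : ℕ) {S : ℕ} {j : ℕ} (h1 : 1 ≤ j) (hj : j < S) : FM3 K S j ∈ DD K S := by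
  apply Finset.mem_insert_of_mem
  simp only [Finset.mem_union]
  exact Or.inr (Finset.mem_image_of_mem _ (Finset.mem_Ico.2 ⟨h1, hj⟩))

lemma mem_DD_cases {K S : ℕ} {G : DNF ℕ} (hG : G ∈ DD K S) :
    G = FA K S ∨ (∃ c : Fin S, G = FB K c) ∨
    (∃ j : ℕ, j < S - 1 ∧ G = FM1 K S j) ∨
    (∃ j : ℕ, 1 ≤ j ∧ j < S - 1 ∧ G = FM2 K S j) ∨
    (∃ j : ℕ, 1 ≤ j ∧ j < S ∧ G = FM3 K S j) := by
  simp only [DD, Finset.mem_insert, Finset.mem_union, Finset.mem_image,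
    Finset.mem_range, Finset.mem_Ico, Finset.mem_univ, true_and] at hG
  rcases hG with h | (((⟨c, h⟩ | ⟨j, hj, h⟩) | ⟨j, hj, h⟩) | ⟨j, hj, h⟩)
  · exact Or.inl h
  · exact Or.inr (Or.inl ⟨c, h.symm⟩)
  · exact Or.inr (Or.inr (Or.inl ⟨j, hj, h.symm⟩))
  · exact Or.inr (Or.inr (Or.inr (Or.inl ⟨j, hj.1, hj.2, h.symm⟩)))
  · exact Or.inr (Or.inr (Or.inr (Or.inr ⟨j, hj.1, hj.2, h.symm⟩)))

/-! ### Satisfaction helpers -/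

@[simp] lemma litEval_pos {V : Type} (α : V → Bool) (v : V) :
    litEval α (v, true) = α v := rfl

@[simp] lemma litEval_neg {V : Type} (α : V → Bool) (v : V) :
    litEval α (v, false) = !(α v) := rfl

lemma trmSat_sel {K S : ℕ} {α : ℕ → Bool} {a : Fin K → Fin S}
    (h : ∀ i, α (Y S i (a i)) = true) : trmSat α (sel a) := by
  intro l hl
  simp only [sel, Finset.mem_image, Finset.mem_univ, true_and] at hl
  obtain ⟨i, rfl⟩ := hl
  simpa using h i

lemma dnfSat_FA_of {K S : ℕ} {α : ℕ → Bool} (a : Fin K → Fin S) (c : Fin S)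
    (hsel : ∀ i, α (Y S i (a i)) = true) (hx : α (X a c) = true) :
    dnfSat α (FA K S) := by
  refine ⟨tA a c, Finset.mem_image_of_mem _ (Finset.mem_univ (a, c)), ?_⟩
  intro l hl
  rcases Finset.mem_insert.1 hl with rfl | hl
  · simpa using hx
  · exact trmSat_sel hsel l hl

lemma dnfSat_FB_of {K S : ℕ} {α : ℕ → Bool} (a : Fin K → Fin S) {c : Fin S}
    (hsel : ∀ i, α (Y S i (a i)) = true) (hx : α (X a c) = false) :
    dnfSat α (FB K c) := by
  refine ⟨tB a c, Finset.mem_image_of_mem _ (Finset.mem_univ a), ?_⟩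
  intro l hl
  rcases Finset.mem_insert.1 hl with rfl | hl
  · simp [hx]
  · exact trmSat_sel hsel l hl

lemma dnfSat_FM1_of {K S : ℕ} {α : ℕ → Bool} (j : ℕ)
    (h : ∀ i : Fin K, α (Y S i j) = true → α (Z S i j) = true) :
    dnfSat α (FM1 K S j) := by
  refine ⟨tM1 S j (fun i => α (Z S i j)), Finset.mem_image_of_mem _ (Finset.mem_univ _), ?_⟩
  intro l hl
  simp only [tM1, Finset.mem_image, Finset.mem_univ, true_and] at hl
  obtain ⟨i, rfl⟩ := hl
  rcases Bool.eq_false_or_eq_true (α (Z S i j)) with hZ | hZ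
  · simp [hZ]
  · have hY : α (Y S i j) = false := by
      cases hY : α (Y S i j)
      · rfl
      · rw [h i hY] at hZ; exact hZ
    simp [hZ, hY]

lemma dnfSat_FM2_of {K S : ℕ} {α : ℕ → Bool} (j : ℕ)
    (h : ∀ i : Fin K, α (Z S i (j-1)) = true → α (Z S i j) = true) :
    dnfSat α (FM2 K S j) := by
  refine ⟨tM2 S j (fun i => !α (Z S i (j-1))), Finset.mem_image_of_mem _ (Finset.mem_univ _), ?_⟩
  intro l hl
  simp only [tM2, Finset.mem_image, Finset.mem_univ, true_and] at hl
  obtain ⟨i, rfl⟩ := hl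
  rcases Bool.eq_false_or_eq_true (α (Z S i (j-1))) with hZ | hZ
  · simp [hZ, h i hZ]
  · simp [hZ]

lemma dnfSat_FM3_of {K S : ℕ} {α : ℕ → Bool} (j : ℕ)
    (h : ∀ i : Fin K, α (Z S i (j-1)) = true → α (Y S i j) = false) :
    dnfSat α (FM3 K S j) := by
  refine ⟨tM3 S j (fun i => !α (Z S i (j-1))), Finset.mem_image_of_mem _ (Finset.mem_univ _), ?_⟩
  intro l hl
  simp only [tM3, Finset.mem_image, Finset.mem_univ, true_and] at hl
  obtain ⟨i, rfl⟩ := hl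
  rcases Bool.eq_false_or_eq_true (α (Z S i (j-1))) with hZ | hZ
  · simp [hZ, h i hZ]
  · simp [hZ]

/-! ### Extraction lemmas -/

lemma FA_extract {K S : ℕ} {α : ℕ → Bool} (h : dnfSat α (FA K S)) :
    ∃ (a : Fin K → Fin S) (c : Fin S),
      (∀ i, α (Y S i (a i)) = true) ∧ α (X a c) = true := by
  obtain ⟨t, ht, hs⟩ := h
  simp only [FA, Finset.mem_image, Finset.mem_univ, true_and] at ht
  obtain ⟨⟨a, c⟩, rfl⟩ := ht
  refine ⟨a, c, fun i => ?_, ?_⟩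
  · have := hs (Y S i (a i), true)
      (Finset.mem_insert_of_mem (Finset.mem_image_of_mem _ (Finset.mem_univ i)))
    simpa using this
  · have := hs ((X a c : ℕ), true) (Finset.mem_insert_self _ _)
    simpa using this

lemma FB_extract {K S : ℕ} {α : ℕ → Bool} {c : Fin S} (h : dnfSat α (FB K c)) :
    ∃ a : Fin K → Fin S,
      (∀ i, α (Y S i (a i)) = true) ∧ α (X a c) = false := by
  obtain ⟨t, ht, hs⟩ := h
  simp only [FB, Finset.mem_image, Finset.mem_univ, true_and] at ht
  obtain ⟨a, rfl⟩ := ht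
  refine ⟨a, fun i => ?_, ?_⟩
  · have := hs (Y S i (a i), true)
      (Finset.mem_insert_of_mem (Finset.mem_image_of_mem _ (Finset.mem_univ i)))
    simpa using this
  · have := hs ((X a c : ℕ), false) (Finset.mem_insert_self _ _)
    simpa using this

lemma FM1_extract {K S : ℕ} {α : ℕ → Bool} {j : ℕ} (h : dnfSat α (FM1 K S j))
    (i : Fin K) (hY : α (Y S i j) = true) : α (Z S i j) = true := by
  obtain ⟨t, ht, hs⟩ := h
  simp only [FM1, Finset.mem_image, Finset.mem_univ, true_and] at ht
  obtain ⟨f, rfl⟩ := ht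
  have := hs _ (Finset.mem_image_of_mem _ (Finset.mem_univ i) :
    (if f i then ((Z S i j : ℕ), true) else ((Y S i j : ℕ), false)) ∈ tM1 S j f)
  cases hf : f i with
  | true => simpa [hf] using this
  | false => simp [hf, hY] at this

lemma FM2_extract {K S : ℕ} {α : ℕ → Bool} {j : ℕ} (h : dnfSat α (FM2 K S j))
    (i : Fin K) (hZ : α (Z S i (j-1)) = true) : α (Z S i j) = true := by
  obtain ⟨t, ht, hs⟩ := h
  simp only [FM2, Finset.mem_image, Finset.mem_univ, true_and] at ht
  obtain ⟨f, rfl⟩ := ht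
  have := hs _ (Finset.mem_image_of_mem _ (Finset.mem_univ i) :
    (if f i then ((Z S i (j-1) : ℕ), false) else ((Z S i j : ℕ), true)) ∈ tM2 S j f)
  cases hf : f i with
  | true => simp [hf, hZ] at this
  | false => simpa [hf] using this

lemma FM3_extract {K S : ℕ} {α : ℕ → Bool} {j : ℕ} (h : dnfSat α (FM3 K S j))
    (i : Fin K) (hZ : α (Z S i (j-1)) = true) : α (Y S i j) = false := by
  obtain ⟨t, ht, hs⟩ := h
  simp only [FM3, Finset.mem_image, Finset.mem_univ, true_and] at ht
  obtain ⟨f, rfl⟩ := ht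
  have := hs _ (Finset.mem_image_of_mem _ (Finset.mem_univ i) :
    (if f i then ((Z S i (j-1) : ℕ), false) else ((Y S i j : ℕ), false)) ∈ tM3 S j f)
  cases hf : f i with
  | true => simp [hf, hZ] at this
  | false => simpa [hf] using this

/-! ### Unsatisfiability -/

lemma chainZ {K S : ℕ} {α : ℕ → Bool} (hsat : setSat α (DD K S)) (i : Fin K) (j : ℕ)
    (hz : α (Z S i j) = true) :
    ∀ j', j ≤ j' → j' ≤ S - 2 → α (Z S i j') = true := by
  intro j' hle hub
  induction j', hle using Nat.le_induction with
  | base => exact hz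
  | succ n hn ih =>
      have h1 : α (Z S i n) = true := ih (by omega)
      exact FM2_extract (hsat _ (FM2_mem K (by omega) (by omega))) i (by simpa using h1)

lemma AMO {K S : ℕ} {α : ℕ → Bool} (hsat : setSat α (DD K S)) (i : Fin K) {j1 j2 : ℕ}
    (h12 : j1 < j2) (h2 : j2 < S) (hy1 : α (Y S i j1) = true)
    (hy2 : α (Y S i j2) = true) : False := by
  have hz1 : α (Z S i j1) = true :=
    FM1_extract (hsat _ (FM1_mem K (show j1 < S - 1 by omega))) i hy1
  have hz2 : α (Z S i (j2 - 1)) = true := by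
    rcases Nat.eq_or_lt_of_le (Nat.succ_le_of_lt h12) with h | h
    · rw [show j2 - 1 = j1 by omega]; exact hz1
    · exact chainZ hsat i j1 hz1 (j2 - 1) (by omega) (by omega)
  have := FM3_extract (hsat _ (FM3_mem K (by omega) h2)) i hz2
  rw [hy2] at this
  cases this

theorem DD_unsat (K S : ℕ) : ¬ Satisfiable (DD K S) := by
  rintro ⟨α, hsat⟩
  obtain ⟨a, c, hsel, hx⟩ := FA_extract (hsat _ (FA_mem K S))
  obtain ⟨a', hsel', hx'⟩ := FB_extract (hsat _ (FB_mem K c))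
  have haa : a' = a := by
    funext i
    by_contra hne
    have hval : (a' i : ℕ) ≠ (a i : ℕ) := fun h => hne (Fin.val_injective h)
    rcases lt_or_gt_of_ne hval with hlt | hgt
    · exact AMO hsat i hlt (a i).isLt (hsel' i) (hsel i)
    · exact AMO hsat i hgt (a' i).isLt (hsel i) (hsel' i)
  rw [haa, hx] at hx'
  cases hx'

/-! ### Witness patterns for minimality -/

def PP {K : ℕ} (i0 : Fin K) (P0 : ℕ → Bool) (p : Fin K → ℕ) : Fin K → ℕ → Bool :=
  fun i j => if i = i0 then P0 j else decide (j = p i)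

def QQ {K : ℕ} (i0 : Fin K) (Q0 : ℕ → Bool) (p : Fin K → ℕ) : Fin K → ℕ → Bool :=
  fun i j => if i = i0 then Q0 j else decide (p i ≤ j)

noncomputable def wit {K S : ℕ} (i0 : Fin K) (P0 Q0 : ℕ → Bool) (p : Fin K → ℕ)
    (ξ : (Fin K → Fin S) → Fin S → Bool) : ℕ → Bool :=
  mk (PP i0 P0 p) (QQ i0 Q0 p) ξ

@[simp] lemma wit_Y {K S : ℕ} (i0 : Fin K) (P0 Q0 p ξ) (i : Fin K) (j : ℕ) :
    wit (S := S) i0 P0 Q0 p ξ (Y S i j) = PP i0 P0 p i j := mk_Y _ _ _ _ _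

@[simp] lemma wit_Z {K S : ℕ} (i0 : Fin K) (P0 Q0 p ξ) (i : Fin K) (j : ℕ) :
    wit (S := S) i0 P0 Q0 p ξ (Z S i j) = QQ i0 Q0 p i j := mk_Z _ _ _ _ _

@[simp] lemma wit_X {K S : ℕ} (i0 : Fin K) (P0 Q0 p ξ) (a : Fin K → Fin S) (c : Fin S) :
    wit i0 P0 Q0 p ξ (X a c) = ξ a c := mk_X _ _ _ _ _

lemma dnfSat_FM1_wit {K S : ℕ} {i0 : Fin K} {P0 Q0 : ℕ → Bool} {p : Fin K → ℕ} {ξ}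
    (j' : ℕ) (h0 : P0 j' = true → Q0 j' = true) :
    dnfSat (wit (S := S) i0 P0 Q0 p ξ) (FM1 K S j') := by
  apply dnfSat_FM1_of
  intro i
  simp only [wit_Y, wit_Z, PP, QQ]
  by_cases hi : i = i0
  · simpa [hi] using h0
  · simp only [hi, if_false, decide_eq_true_eq]
    omega

lemma dnfSat_FM2_wit {K S : ℕ} {i0 : Fin K} {P0 Q0 : ℕ → Bool} {p : Fin K → ℕ} {ξ}
    (j' : ℕ) (h0 : Q0 (j'-1) = true → Q0 j' = true) :
    dnfSat (wit (S := S) i0 P0 Q0 p ξ) (FM2 K S j') := by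
  apply dnfSat_FM2_of
  intro i
  simp only [wit_Y, wit_Z, PP, QQ]
  by_cases hi : i = i0
  · simpa [hi] using h0
  · simp only [hi, if_false, decide_eq_true_eq]
    omega

lemma dnfSat_FM3_wit {K S : ℕ} {i0 : Fin K} {P0 Q0 : ℕ → Bool} {p : Fin K → ℕ} {ξ}
    (j' : ℕ) (hj : 1 ≤ j') (h0 : Q0 (j'-1) = true → P0 j' = false) :
    dnfSat (wit (S := S) i0 P0 Q0 p ξ) (FM3 K S j') := by
  apply dnfSat_FM3_of
  intro i
  simp only [wit_Y, wit_Z, PP, QQ]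
  by_cases hi : i = i0
  · simpa [hi] using h0
  · simp only [hi, if_false, decide_eq_true_eq, decide_eq_false_iff_not]
    omega

/-- master lemma to check satisfaction of `(DD K S).erase F` family by family -/
lemma setSat_erase_of {K S : ℕ} {α : ℕ → Bool} {F : DNF ℕ}
    (hA : F = FA K S ∨ dnfSat α (FA K S))
    (hB : ∀ c : Fin S, F = FB K c ∨ dnfSat α (FB K c))
    (h1 : ∀ j : ℕ, j < S - 1 → (F = FM1 K S j ∨ dnfSat α (FM1 K S j)))
    (h2 : ∀ j : ℕ, 1 ≤ j → j < S - 1 → (F = FM2 K S j ∨ dnfSat α (FM2 K S j)))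
    (h3 : ∀ j : ℕ, 1 ≤ j → j < S → (F = FM3 K S j ∨ dnfSat α (FM3 K S j))) :
    setSat α ((DD K S).erase F) := by
  intro G hG
  obtain ⟨hne, hGD⟩ := Finset.mem_erase.1 hG
  rcases mem_DD_cases hGD with rfl | ⟨c, rfl⟩ | ⟨j, hj, rfl⟩ | ⟨j, h1j, hj, rfl⟩ |
    ⟨j, h1j, hj, rfl⟩
  · rcases hA with h | h
    · exact absurd h.symm hne
    · exact h
  · rcases hB c with h | h
    · exact absurd h.symm hne
    · exact h
  · rcases h1 j hj with h | h
    · exact absurd h.symm hne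
    · exact h
  · rcases h2 j h1j hj with h | h
    · exact absurd h.symm hne
    · exact h
  · rcases h3 j h1j hj with h | h
    · exact absurd h.symm hne
    · exact h

/-! ### tuple/flip helpers -/

def aa {K S : ℕ} (i0 : Fin K) (u : Fin S) (p : Fin K → ℕ) (hp : ∀ i, p i < S) :
    Fin K → Fin S :=
  fun i => if i = i0 then u else ⟨p i, hp i⟩

@[simp] lemma aa_i0 {K S : ℕ} (i0 : Fin K) (u : Fin S) (p) (hp) :
    aa i0 u p hp i0 = u := by simp [aa]

lemma aa_ne {K S : ℕ} {i0 : Fin K} {u : Fin S} {p} {hp} {i : Fin K} (h : i ≠ i0) :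
    aa i0 u p hp i = ⟨p i, hp i⟩ := by simp [aa, h]

def flip {S : ℕ} (hS : 2 ≤ S) (v : Fin S) : Fin S :=
  if v = (⟨0, by omega⟩ : Fin S) then ⟨1, by omega⟩ else ⟨0, by omega⟩

lemma flip_ne {S : ℕ} (hS : 2 ≤ S) (v : Fin S) : flip hS v ≠ v := by
  unfold flip
  split
  · rename_i h
    rw [h]
    simp [Fin.ext_iff]
  · rename_i h
    exact fun hh => h hh.symm

lemma wit_sel_aa {K S : ℕ} (i0 : Fin K) (P0 Q0 : ℕ → Bool) (p : Fin K → ℕ) (ξ)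
    (u : Fin S) (hu : P0 ↑u = true) (hp : ∀ i, p i < S) :
    ∀ i, wit (S := S) i0 P0 Q0 p ξ (Y S i ↑(aa i0 u p hp i)) = true := by
  intro i
  by_cases hi : i = i0
  · subst hi
    simp [aa, PP, hu]
  · simp [aa, hi, PP]

lemma x_notMem_sel {K S : ℕ} (a : Fin K → Fin S) (c : Fin S) (bb : Bool) :
    ((X a c : ℕ), bb) ∉ sel a := by
  simp [sel, Prod.ext_iff]

lemma trmSat_erase_sel {K S : ℕ} {α : ℕ → Bool} {a : Fin K → Fin S} {x : Lit ℕ}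
    {i0 : Fin K} (hx : litEval α x = true)
    (hy : ∀ i, i ≠ i0 → α (Y S i (a i)) = true) :
    trmSat α ((insert x (sel a)).erase ((Y S i0 (a i0) : ℕ), true)) := by
  intro l hl
  obtain ⟨hne, hl⟩ := Finset.mem_erase.1 hl
  rcases Finset.mem_insert.1 hl with rfl | hl
  · exact hx
  · simp only [sel, Finset.mem_image, Finset.mem_univ, true_and] at hl
    obtain ⟨i, rfl⟩ := hl
    have hi : i ≠ i0 := by
      intro h
      exact hne (by rw [h])
    simpa using hy i hi

lemma trmSat_erase_M {K : ℕ} {α : ℕ → Bool} {g : Fin K → Lit ℕ} {i0 : Fin K}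
    (h : ∀ i, i ≠ i0 → litEval α (g i) = true) :
    trmSat α ((Finset.univ.image g).erase (g i0)) := by
  intro l hl
  obtain ⟨hne, hl⟩ := Finset.mem_erase.1 hl
  simp only [Finset.mem_image, Finset.mem_univ, true_and] at hl
  obtain ⟨i, rfl⟩ := hl
  refine h i (fun hh => hne (by rw [hh]))

/-! ### Minimality: case lemmas -/

set_option maxHeartbeats 2000000 in
lemma case_M1 {K S : ℕ} (hS : 2 ≤ S) {j : ℕ} (hj : j < S - 1)
    (f : Fin K → Bool) (i0 : Fin K) :
    ∃ α : ℕ → Bool, setSat α ((DD K S).erase (FM1 K S j)) ∧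
      trmSat α ((tM1 S j f).erase
        (if f i0 then ((Z S i0 j : ℕ), true) else ((Y S i0 j : ℕ), false))) := by
  have hp : ∀ i : Fin K, (if f i then 0 else if j = 0 then 1 else 0) < S := by
    intro i; split_ifs <;> omega
  set p : Fin K → ℕ := fun i => if f i then 0 else if j = 0 then 1 else 0 with hpdef
  set uU : Fin S := ⟨j, by omega⟩ with huU
  set uV : Fin S := ⟨j + 1, by omega⟩ with huV
  set c0 : Fin S := ⟨0, by omega⟩ with hc0
  set aU : Fin K → Fin S := aa i0 uU p hp with haU
  set aV : Fin K → Fin S := aa i0 uV p hp with haV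
  have hUV : aV ≠ aU := by
    intro h
    have h2 := congrFun h i0
    rw [haU, haV, aa_i0, aa_i0, huU, huV, Fin.mk.injEq] at h2
    omega
  refine ⟨wit i0 (fun j' => decide (j' = j ∨ j' = j + 1)) (fun j' => decide (j + 1 ≤ j')) p
    (fun a' c' => decide (a' = aU ∧ c' = c0)), ?_, ?_⟩
  · apply setSat_erase_of
    · right
      refine dnfSat_FA_of aU c0 ?_ (by simp)
      exact wit_sel_aa i0 _ _ p _ uU (by simp [huU]) hp
    · intro c'
      right
      refine dnfSat_FB_of aV ?_ (by simp [hUV])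
      exact wit_sel_aa i0 _ _ p _ uV (by simp [huV]) hp
    · intro j' hj'
      by_cases hjj : j' = j
      · exact Or.inl (by rw [hjj])
      · right
        apply dnfSat_FM1_wit
        simp only [decide_eq_true_eq]
        omega
    · intro j' h1' hj'
      right
      apply dnfSat_FM2_wit
      simp only [decide_eq_true_eq]
      omega
    · intro j' h1' hj'
      right
      apply dnfSat_FM3_wit _ h1'
      simp only [decide_eq_true_eq, decide_eq_false_iff_not]
      omega
  · apply trmSat_erase_M
    intro i hi
    by_cases hf : f i
    · have hpi : p i = 0 := by simp [hpdef, hf]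
      simp [hf, QQ, hi, hpi]
    · have hpi : p i = if j = 0 then 1 else 0 := by simp [hpdef, hf]
      simp [hf, PP, hi, hpi]
      split_ifs <;> omega

set_option maxHeartbeats 2000000 in
lemma case_M2 {K S : ℕ} (hS : 2 ≤ S) {j : ℕ} (h1j : 1 ≤ j) (hj : j < S - 1)
    (f : Fin K → Bool) (i0 : Fin K) :
    ∃ α : ℕ → Bool, setSat α ((DD K S).erase (FM2 K S j)) ∧
      trmSat α ((tM2 S j f).erase
        (if f i0 then ((Z S i0 (j-1) : ℕ), false) else ((Z S i0 j : ℕ), true))) := by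
  have hp : ∀ i : Fin K, (if f i then j else 0) < S := by
    intro i; split_ifs <;> omega
  set p : Fin K → ℕ := fun i => if f i then j else 0 with hpdef
  set uU : Fin S := ⟨j - 1, by omega⟩ with huU
  set uV : Fin S := ⟨j + 1, by omega⟩ with huV
  set c0 : Fin S := ⟨0, by omega⟩ with hc0
  set aU : Fin K → Fin S := aa i0 uU p hp with haU
  set aV : Fin K → Fin S := aa i0 uV p hp with haV
  have hUV : aV ≠ aU := by
    intro h
    have h2 := congrFun h i0
    rw [haU, haV, aa_i0, aa_i0, huU, huV, Fin.mk.injEq] at h2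
    omega
  refine ⟨wit i0 (fun j' => decide (j' = j - 1 ∨ j' = j + 1))
    (fun j' => decide (j' = j - 1 ∨ j + 1 ≤ j')) p
    (fun a' c' => decide (a' = aU ∧ c' = c0)), ?_, ?_⟩
  · apply setSat_erase_of
    · right
      refine dnfSat_FA_of aU c0 ?_ (by simp)
      exact wit_sel_aa i0 _ _ p _ uU (by simp [huU]) hp
    · intro c'
      right
      refine dnfSat_FB_of aV ?_ (by simp [hUV])
      exact wit_sel_aa i0 _ _ p _ uV (by simp [huV]) hp
    · intro j' hj'
      right
      apply dnfSat_FM1_wit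
      simp only [decide_eq_true_eq]
      omega
    · intro j' h1' hj'
      by_cases hjj : j' = j
      · exact Or.inl (by rw [hjj])
      · right
        apply dnfSat_FM2_wit
        simp only [decide_eq_true_eq]
        omega
    · intro j' h1' hj'
      right
      apply dnfSat_FM3_wit _ h1'
      simp only [decide_eq_true_eq, decide_eq_false_iff_not]
      omega
  · apply trmSat_erase_M
    intro i hi
    by_cases hf : f i
    · have hpi : p i = j := by simp [hpdef, hf]
      simp [hf, QQ, hi, hpi]
      all_goals omega
    · have hpi : p i = 0 := by simp [hpdef, hf]
      simp [hf, QQ, hi, hpi]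

set_option maxHeartbeats 2000000 in
lemma case_M3 {K S : ℕ} (hS : 2 ≤ S) {j : ℕ} (h1j : 1 ≤ j) (hj : j < S)
    (f : Fin K → Bool) (i0 : Fin K) :
    ∃ α : ℕ → Bool, setSat α ((DD K S).erase (FM3 K S j)) ∧
      trmSat α ((tM3 S j f).erase
        (if f i0 then ((Z S i0 (j-1) : ℕ), false) else ((Y S i0 j : ℕ), false))) := by
  have hp : ∀ i : Fin K, (if f i then j else 0) < S := by
    intro i; split_ifs <;> omega
  set p : Fin K → ℕ := fun i => if f i then j else 0 with hpdef
  set uU : Fin S := ⟨j - 1, by omega⟩ with huU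
  set uV : Fin S := ⟨j, by omega⟩ with huV
  set c0 : Fin S := ⟨0, by omega⟩ with hc0
  set aU : Fin K → Fin S := aa i0 uU p hp with haU
  set aV : Fin K → Fin S := aa i0 uV p hp with haV
  have hUV : aV ≠ aU := by
    intro h
    have h2 := congrFun h i0
    rw [haU, haV, aa_i0, aa_i0, huU, huV, Fin.mk.injEq] at h2
    omega
  refine ⟨wit i0 (fun j' => decide (j' = j - 1 ∨ j' = j))
    (fun j' => decide (j - 1 ≤ j')) p
    (fun a' c' => decide (a' = aU ∧ c' = c0)), ?_, ?_⟩
  · apply setSat_erase_of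
    · right
      refine dnfSat_FA_of aU c0 ?_ (by simp)
      exact wit_sel_aa i0 _ _ p _ uU (by simp [huU]) hp
    · intro c'
      right
      refine dnfSat_FB_of aV ?_ (by simp [hUV])
      exact wit_sel_aa i0 _ _ p _ uV (by simp [huV]) hp
    · intro j' hj'
      right
      apply dnfSat_FM1_wit
      simp only [decide_eq_true_eq]
      omega
    · intro j' h1' hj'
      right
      apply dnfSat_FM2_wit
      simp only [decide_eq_true_eq]
      omega
    · intro j' h1' hj'
      by_cases hjj : j' = j
      · exact Or.inl (by rw [hjj])
      · right
        apply dnfSat_FM3_wit _ h1'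
        simp only [decide_eq_true_eq, decide_eq_false_iff_not]
        omega
  · apply trmSat_erase_M
    intro i hi
    by_cases hf : f i
    · have hpi : p i = j := by simp [hpdef, hf]
      simp [hf, QQ, hi, hpi]
      all_goals omega
    · have hpi : p i = 0 := by simp [hpdef, hf]
      simp [hf, PP, hi, hpi]
      all_goals omega

set_option maxHeartbeats 2000000 in
lemma case_A_x {K S : ℕ} (hK : 0 < K) (hS : 2 ≤ S) (a : Fin K → Fin S) (c : Fin S) :
    ∃ α : ℕ → Bool, setSat α ((DD K S).erase (FA K S)) ∧
      trmSat α ((tA a c).erase ((X a c : ℕ), true)) := by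
  set i0 : Fin K := ⟨0, hK⟩ with hi0
  refine ⟨wit i0 (fun j' => decide (j' = (a i0 : ℕ))) (fun j' => decide ((a i0 : ℕ) ≤ j'))
    (fun i => (a i : ℕ)) (fun (_ : Fin K → Fin S) (_ : Fin S) => false), ?_, ?_⟩
  all_goals
    have hsel : ∀ i, wit i0 (fun j' => decide (j' = (a i0 : ℕ)))
        (fun j' => decide ((a i0 : ℕ) ≤ j')) (fun i => (a i : ℕ))
        (fun (_ : Fin K → Fin S) (_ : Fin S) => false) (Y S i (a i)) = true := by
      intro i
      rw [wit_Y]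
      unfold PP
      by_cases hi : i = i0
      · subst hi; simp
      · simp [hi]
  · apply setSat_erase_of
    · exact Or.inl rfl
    · intro c'
      right
      exact dnfSat_FB_of a hsel (by simp)
    · intro j' hj'
      right
      apply dnfSat_FM1_wit
      simp only [decide_eq_true_eq]
      omega
    · intro j' h1' hj'
      right
      apply dnfSat_FM2_wit
      simp only [decide_eq_true_eq]
      omega
    · intro j' h1' hj'
      right
      apply dnfSat_FM3_wit _ h1'
      simp only [decide_eq_true_eq, decide_eq_false_iff_not]
      omega
  · unfold tA
    rw [Finset.erase_insert (x_notMem_sel a c true)]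
    exact trmSat_sel hsel

set_option maxHeartbeats 2000000 in
lemma case_A_y {K S : ℕ} (hS : 2 ≤ S) (a : Fin K → Fin S) (c : Fin S) (i0 : Fin K) :
    ∃ α : ℕ → Bool, setSat α ((DD K S).erase (FA K S)) ∧
      trmSat α ((tA a c).erase ((Y S i0 (a i0) : ℕ), true)) := by
  have hp : ∀ i : Fin K, ((a i : ℕ)) < S := fun i => (a i).isLt
  set b : Fin K → Fin S := aa i0 (flip hS (a i0)) (fun i => (a i : ℕ)) hp with hb
  have hba : b ≠ a := by
    intro h
    have h2 := congrFun h i0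
    rw [hb, aa_i0] at h2
    exact flip_ne hS (a i0) h2
  refine ⟨wit i0 (fun j' => decide (j' = (flip hS (a i0) : ℕ)))
    (fun j' => decide ((flip hS (a i0) : ℕ) ≤ j')) (fun i => (a i : ℕ))
    (fun a' c' => decide (a' = a ∧ c' = c)), ?_, ?_⟩
  · have hselb : ∀ i, wit i0 (fun j' => decide (j' = (flip hS (a i0) : ℕ)))
        (fun j' => decide ((flip hS (a i0) : ℕ) ≤ j')) (fun i => (a i : ℕ))
        (fun a' c' => decide (a' = a ∧ c' = c)) (Y S i (b i)) = true := by
      intro i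
      rw [wit_Y]
      unfold PP
      by_cases hi : i = i0
      · subst hi; simp [hb]
      · simp [hi, hb, aa_ne hi]
    apply setSat_erase_of
    · exact Or.inl rfl
    · intro c'
      right
      exact dnfSat_FB_of b hselb (by simp [hba])
    · intro j' hj'
      right
      apply dnfSat_FM1_wit
      simp only [decide_eq_true_eq]
      omega
    · intro j' h1' hj'
      right
      apply dnfSat_FM2_wit
      simp only [decide_eq_true_eq]
      omega
    · intro j' h1' hj'
      right
      apply dnfSat_FM3_wit _ h1'
      simp only [decide_eq_true_eq, decide_eq_false_iff_not]
      omega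
  · unfold tA
    apply trmSat_erase_sel
    · simp
    · intro i hi
      rw [wit_Y]
      unfold PP
      simp [hi]

set_option maxHeartbeats 2000000 in
lemma case_B_x {K S : ℕ} (hK : 0 < K) (hS : 2 ≤ S) (a : Fin K → Fin S) (c : Fin S) :
    ∃ α : ℕ → Bool, setSat α ((DD K S).erase (FB K c)) ∧
      trmSat α ((tB a c).erase ((X a c : ℕ), false)) := by
  set i0 : Fin K := ⟨0, hK⟩ with hi0
  refine ⟨wit i0 (fun j' => decide (j' = (a i0 : ℕ))) (fun j' => decide ((a i0 : ℕ) ≤ j'))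
    (fun i => (a i : ℕ)) (fun a' c' => decide (a' = a ∧ c' = c)), ?_, ?_⟩
  all_goals
    have hsel : ∀ i, wit i0 (fun j' => decide (j' = (a i0 : ℕ)))
        (fun j' => decide ((a i0 : ℕ) ≤ j')) (fun i => (a i : ℕ))
        (fun a' c' => decide (a' = a ∧ c' = c)) (Y S i (a i)) = true := by
      intro i
      rw [wit_Y]
      unfold PP
      by_cases hi : i = i0
      · subst hi; simp
      · simp [hi]
  · apply setSat_erase_of
    · right
      exact dnfSat_FA_of a c hsel (by simp)
    · intro c'
      by_cases hcc : c' = c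
      · exact Or.inl (by rw [hcc])
      · right
        exact dnfSat_FB_of a hsel (by simp [hcc])
    · intro j' hj'
      right
      apply dnfSat_FM1_wit
      simp only [decide_eq_true_eq]
      omega
    · intro j' h1' hj'
      right
      apply dnfSat_FM2_wit
      simp only [decide_eq_true_eq]
      omega
    · intro j' h1' hj'
      right
      apply dnfSat_FM3_wit _ h1'
      simp only [decide_eq_true_eq, decide_eq_false_iff_not]
      omega
  · unfold tB
    rw [Finset.erase_insert (x_notMem_sel a c false)]
    exact trmSat_sel hsel

set_option maxHeartbeats 2000000 in
lemma case_B_y {K S : ℕ} (hS : 2 ≤ S) (a : Fin K → Fin S) (c : Fin S) (i0 : Fin K) :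
    ∃ α : ℕ → Bool, setSat α ((DD K S).erase (FB K c)) ∧
      trmSat α ((tB a c).erase ((Y S i0 (a i0) : ℕ), true)) := by
  have hp : ∀ i : Fin K, ((a i : ℕ)) < S := fun i => (a i).isLt
  set b : Fin K → Fin S := aa i0 (flip hS (a i0)) (fun i => (a i : ℕ)) hp with hb
  have hba : b ≠ a := by
    intro h
    have h2 := congrFun h i0
    rw [hb, aa_i0] at h2
    exact flip_ne hS (a i0) h2
  refine ⟨wit i0 (fun j' => decide (j' = (flip hS (a i0) : ℕ)))
    (fun j' => decide ((flip hS (a i0) : ℕ) ≤ j')) (fun i => (a i : ℕ))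
    (fun a' c' => decide (a' = b ∧ c' = c)), ?_, ?_⟩
  · have hselb : ∀ i, wit i0 (fun j' => decide (j' = (flip hS (a i0) : ℕ)))
        (fun j' => decide ((flip hS (a i0) : ℕ) ≤ j')) (fun i => (a i : ℕ))
        (fun a' c' => decide (a' = b ∧ c' = c)) (Y S i (b i)) = true := by
      intro i
      rw [wit_Y]
      unfold PP
      by_cases hi : i = i0
      · subst hi; simp [hb]
      · simp [hi, hb, aa_ne hi]
    apply setSat_erase_of
    · right
      exact dnfSat_FA_of b c hselb (by simp)
    · intro c'
      by_cases hcc : c' = c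
      · exact Or.inl (by rw [hcc])
      · right
        exact dnfSat_FB_of b hselb (by simp [hcc])
    · intro j' hj'
      right
      apply dnfSat_FM1_wit
      simp only [decide_eq_true_eq]
      omega
    · intro j' h1' hj'
      right
      apply dnfSat_FM2_wit
      simp only [decide_eq_true_eq]
      omega
    · intro j' h1' hj'
      right
      apply dnfSat_FM3_wit _ h1'
      simp only [decide_eq_true_eq, decide_eq_false_iff_not]
      omega
  · unfold tB
    apply trmSat_erase_sel
    · simp [Ne.symm hba]
    · intro i hi
      rw [wit_Y]
      unfold PP
      simp [hi]

lemma minimal_core {K S : ℕ} (hK : 0 < K) (hS : 2 ≤ S) :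
    ∀ F ∈ DD K S, ∀ t ∈ F, ∀ ℓ ∈ t, ∃ α : ℕ → Bool,
      setSat α ((DD K S).erase F) ∧ trmSat α (t.erase ℓ) := by
  intro F hF t ht ℓ hℓ
  rcases mem_DD_cases hF with rfl | ⟨c, rfl⟩ | ⟨j, hj, rfl⟩ | ⟨j, h1j, hj, rfl⟩ |
    ⟨j, h1j, hj, rfl⟩
  · simp only [FA, Finset.mem_image, Finset.mem_univ, true_and] at ht
    obtain ⟨⟨a, c⟩, rfl⟩ := ht
    simp only [tA] at hℓ
    rcases Finset.mem_insert.1 hℓ with rfl | hy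
    · exact case_A_x hK hS a c
    · simp only [sel, Finset.mem_image, Finset.mem_univ, true_and] at hy
      obtain ⟨i0, rfl⟩ := hy
      exact case_A_y hS a c i0
  · simp only [FB, Finset.mem_image, Finset.mem_univ, true_and] at ht
    obtain ⟨a, rfl⟩ := ht
    simp only [tB] at hℓ
    rcases Finset.mem_insert.1 hℓ with rfl | hy
    · exact case_B_x hK hS a c
    · simp only [sel, Finset.mem_image, Finset.mem_univ, true_and] at hy
      obtain ⟨i0, rfl⟩ := hy
      exact case_B_y hS a c i0
  · simp only [FM1, Finset.mem_image, Finset.mem_univ, true_and] at ht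
    obtain ⟨f, rfl⟩ := ht
    simp only [tM1, Finset.mem_image, Finset.mem_univ, true_and] at hℓ
    obtain ⟨i0, rfl⟩ := hℓ
    exact case_M1 hS hj f i0
  · simp only [FM2, Finset.mem_image, Finset.mem_univ, true_and] at ht
    obtain ⟨f, rfl⟩ := ht
    simp only [tM2, Finset.mem_image, Finset.mem_univ, true_and] at hℓ
    obtain ⟨i0, rfl⟩ := hℓ
    exact case_M2 hS h1j hj f i0
  · simp only [FM3, Finset.mem_image, Finset.mem_univ, true_and] at ht
    obtain ⟨f, rfl⟩ := ht
    simp only [tM3, Finset.mem_image, Finset.mem_univ, true_and] at hℓ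
    obtain ⟨i0, rfl⟩ := hℓ
    exact case_M3 hS h1j hj f i0

theorem DD_minUnsat {K S : ℕ} (hK : 0 < K) (hS : 2 ≤ S) : MinUnsat (DD K S) := by
  constructor
  · exact DD_unsat K S
  · intro F hF t ht t' ht'
    obtain ⟨ℓ, hℓt, hℓ'⟩ := Finset.exists_of_ssubset ht'
    obtain ⟨α, hsat, hterm⟩ := minimal_core hK hS F hF t ht ℓ hℓt
    refine ⟨α, ?_⟩
    intro G hG
    simp only [weaken] at hG
    rcases Finset.mem_insert.1 hG with rfl | hG
    · refine ⟨t', Finset.mem_insert_self _ _, ?_⟩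
      intro l hl
      exact hterm l (Finset.mem_erase.2 ⟨fun h => hℓ' (h ▸ hl), ht'.subset hl⟩)
    · exact hsat G hG

/-! ### Counting -/

lemma sel_card_le {K S : ℕ} (a : Fin K → Fin S) : (sel a).card ≤ K :=
  le_trans Finset.card_image_le (by simp)

lemma DD_isKDNF {K S : ℕ} : IsKDNFSet (K + 1) (DD K S) := by
  intro F hF
  rcases mem_DD_cases hF with rfl | ⟨c, rfl⟩ | ⟨j, hj, rfl⟩ | ⟨j, h1j, hj, rfl⟩ |
    ⟨j, h1j, hj, rfl⟩ <;> intro t ht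
  · simp only [FA, Finset.mem_image, Finset.mem_univ, true_and] at ht
    obtain ⟨⟨a, c⟩, rfl⟩ := ht
    exact le_trans (Finset.card_insert_le _ _) (by have := sel_card_le (a, c).1; omega)
  · simp only [FB, Finset.mem_image, Finset.mem_univ, true_and] at ht
    obtain ⟨a, rfl⟩ := ht
    exact le_trans (Finset.card_insert_le _ _) (by have := sel_card_le a; omega)
  · simp only [FM1, Finset.mem_image, Finset.mem_univ, true_and] at ht
    obtain ⟨f, rfl⟩ := ht
    exact le_trans Finset.card_image_le (by simp)
  · simp only [FM2, Finset.mem_image, Finset.mem_univ, true_and] at ht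
    obtain ⟨f, rfl⟩ := ht
    exact le_trans Finset.card_image_le (by simp)
  · simp only [FM3, Finset.mem_image, Finset.mem_univ, true_and] at ht
    obtain ⟨f, rfl⟩ := ht
    exact le_trans Finset.card_image_le (by simp)

lemma DD_card_le {K S : ℕ} : (DD K S).card ≤ 4 * S + 1 := by
  have h0 : (Finset.univ.image (FB K (S := S))).card ≤ S :=
    le_trans Finset.card_image_le (by simp)
  have h1 : ((Finset.range (S-1)).image (FM1 K S)).card ≤ S :=
    le_trans Finset.card_image_le (by simp)
  have h2 : ((Finset.Ico 1 (S-1)).image (FM2 K S)).card ≤ S :=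
    le_trans Finset.card_image_le (by rw [Nat.card_Ico]; omega)
  have h3 : ((Finset.Ico 1 S).image (FM3 K S)).card ≤ S :=
    le_trans Finset.card_image_le (by rw [Nat.card_Ico]; omega)
  have := Finset.card_insert_le (FA K S)
    ((Finset.univ.image (FB K (S := S))) ∪
     ((Finset.range (S-1)).image (FM1 K S)) ∪
     ((Finset.Ico 1 (S-1)).image (FM2 K S)) ∪
     ((Finset.Ico 1 S).image (FM3 K S)))
  have hu1 := Finset.card_union_le
    ((Finset.univ.image (FB K (S := S))) ∪
     ((Finset.range (S-1)).image (FM1 K S)) ∪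
     ((Finset.Ico 1 (S-1)).image (FM2 K S)))
    ((Finset.Ico 1 S).image (FM3 K S))
  have hu2 := Finset.card_union_le
    ((Finset.univ.image (FB K (S := S))) ∪
     ((Finset.range (S-1)).image (FM1 K S)))
    ((Finset.Ico 1 (S-1)).image (FM2 K S))
  have hu3 := Finset.card_union_le
    (Finset.univ.image (FB K (S := S)))
    ((Finset.range (S-1)).image (FM1 K S))
  unfold DD
  omega

lemma FB_injective {K S : ℕ} (hK : 0 < K) (hS : 2 ≤ S) :
    Function.Injective (FB K (S := S)) := by
  intro c c' h
  have ha0 : ∀ i : Fin K, ((fun _ : Fin K => (⟨0, by omega⟩ : Fin S)) i) = ⟨0, by omega⟩ :=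
    fun _ => rfl
  set a0 : Fin K → Fin S := fun _ => ⟨0, by omega⟩ with ha0def
  have hmem : tB a0 c ∈ FB K c' := by
    rw [← h]
    exact Finset.mem_image_of_mem _ (Finset.mem_univ a0)
  simp only [FB, Finset.mem_image, Finset.mem_univ, true_and] at hmem
  obtain ⟨a', ha'⟩ := hmem
  have hx : ((X a0 c : ℕ), false) ∈ tB a' c' := by
    rw [ha']
    exact Finset.mem_insert_self _ _
  simp only [tB] at hx
  rcases Finset.mem_insert.1 hx with heq | hsel
  · have := (Prod.ext_iff.1 heq).1
    exact (X_inj.1 this).2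
  · exfalso
    simp only [sel, Finset.mem_image, Finset.mem_univ, true_and] at hsel
    obtain ⟨i, hi⟩ := hsel
    have := (Prod.ext_iff.1 hi).2
    simp at this

lemma DD_card_ge {K S : ℕ} (hK : 0 < K) (hS : 2 ≤ S) : S ≤ (DD K S).card := by
  have hsub : Finset.univ.image (FB K (S := S)) ⊆ DD K S := by
    intro G hG
    simp only [Finset.mem_image, Finset.mem_univ, true_and] at hG
    obtain ⟨c, rfl⟩ := hG
    exact FB_mem K c
  have hcard : (Finset.univ.image (FB K (S := S))).card = S := by
    rw [Finset.card_image_of_injective _ (FB_injective hK hS)]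
    simp
  calc S = (Finset.univ.image (FB K (S := S))).card := hcard.symm
    _ ≤ (DD K S).card := Finset.card_le_card hsub

lemma vars_lb {K S : ℕ} : S ^ (K + 1) ≤ (setVars (DD K S)).card := by
  have hinj : Function.Injective (fun p : (Fin K → Fin S) × Fin S => (X p.1 p.2 : ℕ)) := by
    intro p q h
    obtain ⟨h1, h2⟩ := X_inj.1 h
    exact Prod.ext h1 h2
  have hsub : Finset.univ.image (fun p : (Fin K → Fin S) × Fin S => (X p.1 p.2 : ℕ))
      ⊆ setVars (DD K S) := by
    intro v hv
    simp only [Finset.mem_image, Finset.mem_univ, true_and] at hv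
    obtain ⟨⟨a, c⟩, rfl⟩ := hv
    apply Finset.mem_biUnion.2
    refine ⟨FA K S, FA_mem K S, ?_⟩
    apply Finset.mem_biUnion.2
    refine ⟨tA a c, Finset.mem_image_of_mem _ (Finset.mem_univ (a, c)), ?_⟩
    apply Finset.mem_image.2
    exact ⟨((X a c : ℕ), true), Finset.mem_insert_self _ _, rfl⟩
  have hcard : (Finset.univ.image
      (fun p : (Fin K → Fin S) × Fin S => (X p.1 p.2 : ℕ))).card = S ^ (K + 1) := by
    rw [Finset.card_image_of_injective _ hinj]
    simp [Fintype.card_fun, pow_succ]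
  calc S ^ (K + 1) = _ := hcard.symm
    _ ≤ (setVars (DD K S)).card := Finset.card_le_card hsub


set_option maxHeartbeats 4000000 in
/-- For every `k ≥ 2` and every `N` there exists a minimally
unsatisfiable `k`-DNF set `D` with `m = |D| ≥ N` formulas such that
`|vars(D)| > (m/8)^k`. -/
theorem exists_min_unsat_kDNF_vars_lower_bound' (k N : ℕ) (hk : 2 ≤ k) :
    ∃ D : DNFSet ℕ, IsKDNFSet k D ∧ MinUnsat D ∧ N ≤ D.card ∧
      ((D.card : ℝ)/8)^k < ((setVars D).card : ℝ) := by
  obtain ⟨K, rfl⟩ : ∃ K, k = K + 1 := ⟨k - 1, by omega⟩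
  have hK : 0 < K := by omega
  have hS : 2 ≤ N + 2 := by omega
  refine ⟨DD K (N + 2), DD_isKDNF, DD_minUnsat hK hS, ?_, ?_⟩
  · have := DD_card_ge (S := N + 2) hK hS
    omega
  · have hle : (DD K (N + 2)).card ≤ 4 * (N + 2) + 1 := DD_card_le
    have hlt : (DD K (N + 2)).card < 8 * (N + 2) := by omega
    have hlb := vars_lb (K := K) (S := N + 2)
    have hdiv : ((DD K (N + 2)).card : ℝ) / 8 < ((N + 2 : ℕ) : ℝ) := by
      rw [div_lt_iff₀ (by norm_num)]
      calc ((DD K (N + 2)).card : ℝ) < ((8 * (N + 2) : ℕ) : ℝ) := by exact_mod_cast hlt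
        _ = ((N + 2 : ℕ) : ℝ) * 8 := by push_cast; ring
    calc (((DD K (N + 2)).card : ℝ) / 8) ^ (K + 1)
        < (((N + 2 : ℕ) : ℝ)) ^ (K + 1) := by
          apply pow_lt_pow_left₀ hdiv (div_nonneg (Nat.cast_nonneg _) (by norm_num))
          omega
      _ = (((N + 2) ^ (K + 1) : ℕ) : ℝ) := by push_cast; ring
      _ ≤ ((setVars (DD K (N + 2))).card : ℝ) := by exact_mod_cast hlb

end PaperKDNF
end
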